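/- arXiv:1312.0491 — 6 statements merged into one kernel-verified Lean document; each statement's English description precedes it below -/
import Mathlib

section
/- Let x, c ∈ ℚ and suppose x is preperiodic under φ_c(z) = z² + c. Write x = m/n in lowest terms with n ≥ 1. Then the denominator of c (in lowest terms) equals n²; that is, c = k/n² for some integer k coprime to n. -/
/-- The quadratic polynomial map `φ_c(z) = z² + c`. -/
def phiC (c : ℚ) : ℚ → ℚ := fun z => z ^ 2 + c

/-- `x` is preperiodic under `φ_c`: its forward orbit is finite. -/
def Preper (c x : ℚ) : Prop :=
  ∃ m n : ℕ, m < n ∧ (phiC c)^[n] x = (phiC c)^[m] x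

section aux

variable {p : ℕ} [hp : Fact p.Prime]

/-- If `v b < v a` then `v (a+b) = v b`. -/
lemma val_add_eq_right {a b : ℚ} (hb : b ≠ 0)
    (h : padicValRat p b < padicValRat p a) :
    padicValRat p (a + b) = padicValRat p b := by
  by_cases ha : a = 0
  · simp [ha]
  have hab : a + b ≠ 0 := by
    intro hz
    have : a = -b := by linarith [hz ▸ (rfl : a + b = a + b), add_eq_zero_iff_eq_neg.mp hz]
    rw [this, padicValRat.neg] at h
    exact lt_irrefl _ h
  rw [padicValRat.add_eq_min hab ha hb (ne_of_gt h), min_eq_right h.le]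

/-- "Escaping" condition at prime `p`. -/
def Esc (p : ℕ) (c y : ℚ) : Prop :=
  padicValRat p y < 0 ∧ (c = 0 ∨ 2 * padicValRat p y < padicValRat p c)

lemma esc_step {c y : ℚ} (h : Esc p c y) :
    Esc p c (phiC c y) ∧ padicValRat p (phiC c y) = 2 * padicValRat p y := by
  obtain ⟨hv, hc⟩ := h
  have hy : y ≠ 0 := by
    intro h0; rw [h0, padicValRat.zero] at hv; exact lt_irrefl _ hv
  have hsq : padicValRat p (y ^ 2) = 2 * padicValRat p y := by
    rw [padicValRat.pow y]; push_cast; ring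
  have hval : padicValRat p (phiC c y) = 2 * padicValRat p y := by
    rcases hc with hc0 | hlt
    · simp only [phiC, hc0, add_zero]; exact hsq
    · -- v (y^2) < v c, so v(y^2 + c) = v(y^2)
      have := val_add_eq_right (p := p) (a := c) (b := y ^ 2)
          (pow_ne_zero 2 hy) (by rw [hsq]; exact hlt)
      rw [add_comm] at this
      simpa [phiC, hsq] using this
  refine ⟨⟨?_, ?_⟩, hval⟩
  · rw [hval]; linarith
  · rcases hc with hc0 | hlt
    · exact Or.inl hc0
    · exact Or.inr (by rw [hval]; linarith)

lemma esc_iter {c y : ℚ} (h : Esc p c y) (k : ℕ) :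
    Esc p c ((phiC c)^[k] y) ∧
      padicValRat p ((phiC c)^[k] y) ≤ padicValRat p y - k := by
  induction k with
  | zero => simpa using h
  | succ n ih =>
    obtain ⟨hE, hle⟩ := ih
    obtain ⟨hE', heq⟩ := esc_step hE
    rw [Function.iterate_succ_apply']
    refine ⟨hE', ?_⟩
    rw [heq]
    have hneg := hE.1
    push_cast
    linarith

lemma not_esc {c y : ℚ} (h : Preper c y) : ¬ Esc p c y := by
  intro hE
  obtain ⟨m, n, hmn, heq⟩ := h
  obtain ⟨hEm, _⟩ := esc_iter hE m
  set z := (phiC c)^[m] y with hz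
  have ht : n = (n - m) + m := by omega
  have hiter : (phiC c)^[n - m] z = z := by
    rw [hz, ← Function.iterate_add_apply, ← ht, heq]
  have := (esc_iter hEm (n - m)).2
  rw [hiter] at this
  have hpos : (0 : ℤ) < (n - m : ℕ) := by exact_mod_cast Nat.sub_pos_of_lt hmn
  linarith

lemma preper_shift {c y : ℚ} (h : Preper c y) : Preper c (phiC c y) := by
  obtain ⟨m, n, hmn, heq⟩ := h
  exact ⟨m, n, hmn, by
    rw [← Function.iterate_succ_apply, ← Function.iterate_succ_apply,
      Function.iterate_succ_apply', Function.iterate_succ_apply', heq]⟩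

lemma val_of_den_dvd {q : ℚ} (hd : p ∣ q.den) :
    padicValRat p q = -(padicValNat p q.den : ℤ) := by
  have hnum : ¬ p ∣ q.num.natAbs := by
    intro hn
    have := Nat.Coprime.eq_one_of_dvd (Nat.Coprime.coprime_dvd_left hn q.reduced) hd
    exact hp.out.ne_one this
  have : padicValInt p q.num = 0 := by
    unfold padicValInt
    exact padicValNat.eq_zero_of_not_dvd hnum
  rw [padicValRat_def, this]; ring

omit hp in
lemma val_of_den_not_dvd {q : ℚ} (hd : ¬ p ∣ q.den) :
    0 ≤ padicValRat p q := by
  have : padicValNat p q.den = 0 := padicValNat.eq_zero_of_not_dvd hd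
  rw [padicValRat_def, this]
  simp

omit hp in
lemma den_dvd_of_val_neg {q : ℚ} (h : padicValRat p q < 0) : p ∣ q.den := by
  by_contra hd
  exact absurd (val_of_den_not_dvd hd) (not_le.mpr h)

end aux

theorem denominator_of_preperiodic (c x : ℚ) (h : Preper c x) :
    c.den = x.den ^ 2 ∧
    ∃ k : ℤ, c = (k : ℚ) / ((x.den : ℚ)) ^ 2 ∧ Int.gcd k (x.den : ℤ) = 1 := by
  -- per-prime key facts
  have key : ∀ p : ℕ, p.Prime → c.den.factorization p = (x.den ^ 2).factorization p := by
    intro p pp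
    haveI : Fact p.Prime := ⟨pp⟩
    have hA : ¬ Esc p c x := not_esc h
    have hB : ¬ (padicValRat p c < 2 * padicValRat p x ∧ padicValRat p c < 0) := by
      rintro ⟨h1, h2⟩
      have hc0 : c ≠ 0 := by
        intro hz; rw [hz, padicValRat.zero] at h2; exact lt_irrefl _ h2
      have hval : padicValRat p (phiC c x) = padicValRat p c := by
        by_cases hx : x = 0
        · simp [phiC, hx]
        · have hsq : padicValRat p (x ^ 2) = 2 * padicValRat p x := by
            rw [padicValRat.pow x]; push_cast; ring
          have := val_add_eq_right (p := p) (a := x ^ 2) (b := c) hc0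
            (by rw [hsq]; exact h1)
          simpa [phiC] using this
      have hE : Esc p c (phiC c x) := by
        refine ⟨by rw [hval]; exact h2, Or.inr ?_⟩
        rw [hval]; linarith
      exact not_esc (preper_shift h) hE
    rw [Nat.factorization_pow, Finsupp.smul_apply, smul_eq_mul,
      Nat.factorization_def _ pp, Nat.factorization_def _ pp]
    by_cases hpx : p ∣ x.den
    · -- v x < 0
      have hvx := val_of_den_dvd (p := p) hpx
      have hf1 : 1 ≤ padicValNat p x.den :=
        one_le_padicValNat_of_dvd x.den_nz hpx
      have hvxneg : padicValRat p x < 0 := by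
        rw [hvx]; simp only [Left.neg_neg_iff]; exact_mod_cast hf1
      -- from ¬Esc: c ≠ 0 and v c ≤ 2 v x
      have h1 : padicValRat p c ≤ 2 * padicValRat p x := by
        by_contra hlt
        exact hA ⟨hvxneg, Or.inr (not_le.mp hlt)⟩
      have h2 : padicValRat p c = 2 * padicValRat p x := by
        rcases lt_or_eq_of_le h1 with hlt | heq
        · exact absurd ⟨hlt, by linarith⟩ hB
        · exact heq
      have hvcneg : padicValRat p c < 0 := by rw [h2]; linarith
      have hpc : p ∣ c.den := den_dvd_of_val_neg hvcneg
      have hvc := val_of_den_dvd (p := p) hpc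
      rw [hvc, hvx] at h2
      omega
    · -- v x ≥ 0, show p ∤ c.den
      have hvx0 : padicValNat p x.den = 0 := padicValNat.eq_zero_of_not_dvd hpx
      have hvx := val_of_den_not_dvd (p := p) hpx
      have hpc : ¬ p ∣ c.den := by
        intro hpc
        have hvc := val_of_den_dvd (p := p) hpc
        have hf1 : 1 ≤ padicValNat p c.den :=
          one_le_padicValNat_of_dvd c.den_nz hpc
        have hvcneg : padicValRat p c < 0 := by
          rw [hvc]; simp only [Left.neg_neg_iff]; exact_mod_cast hf1
        exact hB ⟨by linarith, hvcneg⟩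
      rw [hvx0, padicValNat.eq_zero_of_not_dvd hpc]
  have hden : c.den = x.den ^ 2 := by
    refine Nat.eq_of_factorization_eq c.den_nz (pow_ne_zero 2 x.den_nz) fun p => ?_
    by_cases pp : p.Prime
    · exact key p pp
    · rw [Nat.factorization_eq_zero_of_not_prime _ pp,
        Nat.factorization_eq_zero_of_not_prime _ pp]
  refine ⟨hden, c.num, ?_, ?_⟩
  · conv_lhs => rw [← Rat.num_div_den c]
    rw [hden]
    push_cast
    ring
  · have hcop : Nat.Coprime c.num.natAbs c.den := c.reduced
    rw [hden] at hcop
    have : Nat.Coprime c.num.natAbs x.den :=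
      Nat.Coprime.coprime_dvd_right (dvd_pow_self x.den two_ne_zero) hcop
    simpa [Int.gcd] using this
end

section
/- Let x, c ∈ ℚ with x = m/n in lowest terms, and suppose x is preperiodic under φ_c(z) = z² + c, so that c = k/n² with k ∈ ℤ coprime to n. Then k ≡ -m² (mod n), and the integers n and (k + m²)/n are relatively prime. -/
section aux

variable {p : ℕ} [hp : Fact p.Prime]

lemma preper_apply {c x : ℚ} (h : Preper c x) : Preper c (phiC c x) := by
  obtain ⟨m, n, hmn, he⟩ := h
  refine ⟨m, n, hmn, ?_⟩
  rw [← Function.iterate_succ_apply, ← Function.iterate_succ_apply,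
    Function.iterate_succ_apply', Function.iterate_succ_apply', he]

lemma blowup (c z : ℚ) (hc : c ≠ 0) (h2 : 2 * padicValRat p z < padicValRat p c)
    (hz : padicValRat p z < 0) (j : ℕ) :
    padicValRat p ((phiC c)^[j] z) = 2 ^ j * padicValRat p z := by
  induction j with
  | zero => simp
  | succ j ih =>
    set w := (phiC c)^[j] z with hw
    have hwne : w ≠ 0 := by
      intro h0
      rw [h0, padicValRat.zero] at ih
      have h1 : (2:ℤ)^j * padicValRat p z < 0 :=
        mul_neg_of_pos_of_neg (by positivity) hz
      omega
    have hsq : padicValRat p (w ^ 2) = 2 ^ (j+1) * padicValRat p z := by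
      rw [padicValRat.pow w, ih]; ring
    have hlt : padicValRat p (w ^ 2) < padicValRat p c := by
      rw [hsq]
      have h1 : (2:ℤ) ^ (j+1) * padicValRat p z ≤ 2 * padicValRat p z := by
        have h3 : (2:ℤ) ≤ 2 ^ (j+1) := by
          calc (2:ℤ) = 2^1 := by norm_num
          _ ≤ 2^(j+1) := pow_le_pow_right₀ (by norm_num) (by omega)
        nlinarith
      omega
    have hne : w ^ 2 + c ≠ 0 := by
      intro h0
      have hc' : c = -(w^2) := by linarith
      rw [hc', padicValRat.neg] at hlt
      omega
    rw [Function.iterate_succ_apply', ← hw]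
    show padicValRat p (w ^ 2 + c) = _
    rw [padicValRat.add_eq_of_lt hne (pow_ne_zero _ hwne) hc hlt, hsq]

lemma no_blowup {c z : ℚ} (h : Preper c z) (hc : c ≠ 0)
    (h2 : 2 * padicValRat p z < padicValRat p c) : ¬ padicValRat p z < 0 := by
  intro hz
  obtain ⟨m, n, hmn, he⟩ := h
  have h1 := blowup (p := p) c z hc h2 hz n
  have h2' := blowup (p := p) c z hc h2 hz m
  rw [he, h2'] at h1
  have hzne : padicValRat p z ≠ 0 := ne_of_lt hz
  have heq : (2:ℤ)^m = 2^n := mul_right_cancel₀ hzne h1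
  have hlt : (2:ℤ)^m < 2^n := pow_lt_pow_right₀ (by norm_num) hmn
  omega

lemma num_val_eq_zero {q : ℚ} (hd : p ∣ q.den) : padicValInt p q.num = 0 := by
  have hnum : ¬ p ∣ q.num.natAbs := by
    intro hdvd
    have h1 : p ∣ Nat.gcd q.num.natAbs q.den := Nat.dvd_gcd hdvd hd
    rw [Nat.Coprime.gcd_eq_one q.reduced] at h1
    exact hp.out.one_lt.ne' (Nat.dvd_one.mp h1)
  exact padicValNat.eq_zero_of_not_dvd hnum

lemma valden_of_neg {q : ℚ} (h : padicValRat p q < 0) :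
    (padicValNat p q.den : ℤ) = -padicValRat p q := by
  by_cases hd : p ∣ q.den
  · rw [padicValRat_def, num_val_eq_zero hd]
    omega
  · rw [padicValRat_def, padicValNat.eq_zero_of_not_dvd hd] at h
    have : (0:ℤ) ≤ padicValInt p q.num := Int.natCast_nonneg _
    omega

lemma valden_of_nonneg {q : ℚ} (h : 0 ≤ padicValRat p q) : padicValNat p q.den = 0 := by
  by_cases hd : p ∣ q.den
  · rw [padicValRat_def, num_val_eq_zero hd] at h
    omega
  · exact padicValNat.eq_zero_of_not_dvd hd

end aux

theorem congruence_of_preperiodic (c x : ℚ) (h : Preper c x)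
    (k : ℤ) (n : ℕ) (hn : n = x.den)
    (hk : c = (k : ℚ) / ((n : ℚ)) ^ 2) (hcop : Int.gcd k (n : ℤ) = 1) :
    k ≡ -x.num ^ 2 [ZMOD (n : ℤ)] ∧
    ((n : ℤ) ∣ (k + x.num ^ 2)) ∧
    Int.gcd ((k + x.num ^ 2) / (n : ℤ)) (n : ℤ) = 1 := by
  -- From `n ∣ k + x.num ^ 2` the congruence follows, so reduce to the last two goals.
  suffices hmain : ((n : ℤ) ∣ (k + x.num ^ 2)) ∧
      Int.gcd ((k + x.num ^ 2) / (n : ℤ)) (n : ℤ) = 1 by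
    refine ⟨?_, hmain⟩
    have h1 : (n : ℤ) ∣ k - -x.num ^ 2 := by
      have he : k - -x.num ^ 2 = k + x.num ^ 2 := by ring
      rw [he]; exact hmain.1
    exact Int.ModEq.symm (Int.modEq_iff_dvd.mpr h1)
  by_cases hn1 : n = 1
  · subst hn1
    refine ⟨one_dvd _, ?_⟩
    simp [Int.gcd]
  -- now n ≥ 2
  have hnpos : 0 < n := hn ▸ x.pos
  have hn2 : 2 ≤ n := by omega
  have hnQ : (n : ℚ) ≠ 0 := by positivity
  have hk0 : k ≠ 0 := by
    intro h0
    rw [h0] at hcop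
    simp [Int.gcd] at hcop
    omega
  have hc0 : c ≠ 0 := by
    rw [hk]
    exact div_ne_zero (by exact_mod_cast hk0) (by positivity)
  have hx0 : x ≠ 0 := by
    intro h0
    rw [h0] at hn
    simp at hn
    omega
  set y := phiC c x with hy
  have hpy : Preper c y := preper_apply h
  have hxval : x = (x.num : ℚ) / (n : ℚ) := by
    rw [hn]; exact (Rat.num_div_den x).symm
  have hxn : (x.num : ℚ) = x * (n : ℚ) := by
    nth_rewrite 2 [hxval]
    exact (div_mul_cancel₀ _ hnQ).symm
  have hyval : y = ((k + x.num ^ 2 : ℤ) : ℚ) / (n : ℚ) ^ 2 := by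
    rw [hy]
    show x ^ 2 + c = _
    rw [hk]
    push_cast
    rw [hxn]
    field_simp
    ring
  -- key claim: y.den = n
  have hyden : y.den = n := by
    apply Nat.eq_of_factorization_eq y.den_nz (by omega)
    intro p
    by_cases hpp : p.Prime
    · haveI : Fact p.Prime := ⟨hpp⟩
      rw [Nat.factorization_def _ hpp, Nat.factorization_def _ hpp]
      set e : ℕ := padicValNat p n with he
      -- valuation of c
      have hvc : padicValRat p c = padicValInt p k - 2 * e := by
        rw [hk, padicValRat.div (by exact_mod_cast hk0) (by positivity),
          padicValRat.pow (n:ℚ)]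
        rw [padicValRat.of_int]
        norm_cast
      have hvx : padicValRat p x = padicValInt p x.num - e := by
        rw [padicValRat_def, ← hn]
      by_cases hpn : p ∣ n
      · -- p divides n : e ≥ 1
        have he1 : 1 ≤ e := one_le_padicValNat_of_dvd hnpos.ne' hpn
        have hknd : ¬ (p : ℤ) ∣ k := by
          intro hdvd
          have h1 : (p : ℤ) ∣ (Int.gcd k (n : ℤ) : ℤ) :=
            Int.dvd_coe_gcd hdvd (Int.natCast_dvd_natCast.mpr hpn)
          rw [hcop] at h1
          norm_num at h1
          have h2 : (p:ℤ) = 1 := Int.eq_one_of_dvd_one (by positivity) h1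
          exact hpp.ne_one (by exact_mod_cast h2)
        have hvk : padicValInt p k = 0 := padicValInt.eq_zero_of_not_dvd hknd
        have hvc' : padicValRat p c = -(2 * e) := by rw [hvc, hvk]; push_cast; ring
        have hxnum : padicValInt p x.num = 0 := num_val_eq_zero (hn ▸ hpn)
        have hvx' : padicValRat p x = -e := by rw [hvx, hxnum]; ring
        -- show padicValRat p y = -e
        have hvy : padicValRat p y = -e := by
          rcases lt_trichotomy (padicValRat p y) (-(e:ℤ)) with hlt | heq | hgt
          · exact absurd (by omega : padicValRat p y < 0)
              (no_blowup (p := p) hpy hc0 (by rw [hvc']; omega))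
          · exact heq
          · exfalso
            -- consider z = phiC c y
            set z := phiC c y with hz
            have hpz : Preper c z := preper_apply hpy
            have hvz : padicValRat p z = -(2 * e) := by
              by_cases hy0 : y = 0
              · have : z = c := by rw [hz, hy0]; show (0:ℚ)^2 + c = c; ring
                rw [this, hvc']
              · have hysq : padicValRat p (y ^ 2) = 2 * padicValRat p y :=
                  padicValRat.pow y
                have hlt2 : padicValRat p c < padicValRat p (y ^ 2) := by
                  rw [hysq, hvc']; omega
                have hne : c + y ^ 2 ≠ 0 := by
                  intro h0
                  have hceq : c = -(y^2) := by linarith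
                  rw [hceq, padicValRat.neg] at hlt2
                  omega
                have : padicValRat p (c + y ^ 2) = padicValRat p c :=
                  padicValRat.add_eq_of_lt hne hc0 (pow_ne_zero _ hy0) hlt2
                have hzy : z = c + y ^ 2 := by rw [hz]; show y^2 + c = _; ring
                rw [hzy, this, hvc']
            exact absurd (by rw [hvz]; omega : padicValRat p z < 0)
              (no_blowup (p := p) hpz hc0 (by rw [hvz, hvc']; omega))
        have := valden_of_neg (p := p) (q := y) (by rw [hvy]; omega)
        rw [hvy] at this
        omega
      · -- p does not divide n : e = 0, show p ∤ y.den
        have he0 : e = 0 := padicValNat.eq_zero_of_not_dvd hpn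
        rw [he0]
        by_cases hy0 : y = 0
        · rw [hy0]; simp
        · apply valden_of_nonneg
          have hvc' : (0:ℤ) ≤ padicValRat p c := by
            rw [hvc, he0]
            have : (0:ℤ) ≤ padicValInt p k := Int.natCast_nonneg _
            omega
          have hvx2 : (0:ℤ) ≤ padicValRat p (x ^ 2) := by
            rw [padicValRat.pow x, hvx, he0]
            have : (0:ℤ) ≤ padicValInt p x.num := Int.natCast_nonneg _
            omega
          have hy0' : x ^ 2 + c ≠ 0 := by
            rw [hy] at hy0; exact hy0
          have hmin := padicValRat.min_le_padicValRat_add (p := p) hy0'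
          have : padicValRat p y = padicValRat p (x ^ 2 + c) := by rw [hy]; rfl
          rw [this]
          omega
    · rw [Nat.factorization_eq_zero_of_not_prime _ hpp,
        Nat.factorization_eq_zero_of_not_prime _ hpp]
  -- now conclude from y.den = n
  have hZ : y.num * (n : ℤ) = k + x.num ^ 2 := by
    have h1 : (y.num : ℚ) / (n : ℚ) = ((k + x.num ^ 2 : ℤ) : ℚ) / (n : ℚ) ^ 2 := by
      nth_rewrite 1 [← hyden]
      rw [Rat.num_div_den y]
      exact hyval
    rw [div_eq_div_iff hnQ (by positivity)] at h1
    have h1Z : y.num * (n:ℤ) ^ 2 = (k + x.num ^ 2) * n := by exact_mod_cast h1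
    have h3 : (y.num * (n:ℤ)) * n = (k + x.num ^ 2) * n := by rw [← h1Z]; ring
    exact Int.eq_of_mul_eq_mul_right (by exact_mod_cast hnpos.ne') h3
  constructor
  · exact ⟨y.num, by rw [← hZ]; ring⟩
  · have hdiv : (k + x.num ^ 2) / (n : ℤ) = y.num := by
      rw [← hZ]
      exact Int.mul_ediv_cancel _ (by exact_mod_cast hnpos.ne')
    rw [hdiv]
    have := y.reduced
    rw [hyden] at this
    simpa [Int.gcd] using this
end

section
/- The set of rational preperiodic points of φ(z) = z² + 1/4 acting on ℚ is exactly {1/2, -1/2}. -/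
def psi : ℚ → ℚ := fun w => w ^ 2 + w

lemma aux_den (a : ℤ) (b : ℕ) (hb : 0 < b) (h : Nat.Coprime a.natAbs b) :
    (((a:ℚ)/(b:ℚ))^2 + (a:ℚ)/(b:ℚ)).den = b^2 := by
  have hb0 : ((b:ℚ)) ≠ 0 := by exact_mod_cast hb.ne'
  have heq : ((a:ℚ)/(b:ℚ))^2 + (a:ℚ)/(b:ℚ) = ((a^2 + a*b : ℤ):ℚ)/(((b:ℤ)^2 : ℤ):ℚ) := by
    push_cast
    field_simp
  have hco : IsCoprime (a : ℤ) (b : ℤ) := by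
    rw [Int.isCoprime_iff_gcd_eq_one]
    exact h
  have hco2 : IsCoprime (a^2 + a*b) ((b:ℤ)^2) := by
    have h1 : IsCoprime (a^2 + a*b) (b:ℤ) := by
      have h2 : IsCoprime (a^2) (b:ℤ) := hco.pow_left
      have := h2.add_mul_right_left a
      convert this using 1
    exact h1.pow_right
  have hd := Rat.den_div_eq_of_coprime (a := a^2 + a*b) (b := (b:ℤ)^2)
      (by positivity) (by rwa [Int.isCoprime_iff_gcd_eq_one, Int.gcd] at hco2)
  rw [heq]
  have : ((b:ℤ)^2) = ((b^2 : ℕ) : ℤ) := by push_cast; ring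
  omega

lemma psi_den (w : ℚ) : (psi w).den = w.den ^ 2 := by
  have := aux_den w.num w.den w.pos w.reduced
  rw [psi]
  conv_lhs => rw [← Rat.num_div_den w]
  exact this

lemma psi_iter_den (w : ℚ) (n : ℕ) : (psi^[n] w).den = w.den ^ (2^n) := by
  induction n with
  | zero => simp
  | succ n ih =>
      rw [Function.iterate_succ_apply', psi_den, ih, ← pow_mul, pow_succ]

lemma psi_iter_ge (w : ℚ) (hw : 1 ≤ w) (n : ℕ) : w + n ≤ psi^[n] w := by
  induction n with
  | zero => simp
  | succ n ih =>
      have h1 : (1:ℚ) ≤ psi^[n] w := by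
        have : (0:ℚ) ≤ n := by positivity
        linarith
      rw [Function.iterate_succ_apply']
      have : psi^[n] w + 1 ≤ psi (psi^[n] w) := by
        simp only [psi]; nlinarith
      push_cast
      linarith

lemma not_pre_of_one_le (w : ℚ) (hw : 1 ≤ w) :
    ¬ ∃ m n : ℕ, m < n ∧ psi^[n] w = psi^[m] w := by
  rintro ⟨m, n, hmn, heq⟩
  have h1 : (1:ℚ) ≤ psi^[m] w := by
    have := psi_iter_ge w hw m
    have : (0:ℚ) ≤ m := by positivity
    have := psi_iter_ge w hw m
    linarith
  have h2 := psi_iter_ge (psi^[m] w) h1 (n - m)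
  have h3 : psi^[n - m] (psi^[m] w) = psi^[n] w := by
    rw [← Function.iterate_add_apply]
    congr 1
    omega
  have h4 : (1:ℚ) ≤ ((n - m : ℕ) : ℚ) := by
    have : 1 ≤ n - m := by omega
    exact_mod_cast this
  rw [h3, heq] at h2
  linarith

lemma conj (x : ℚ) (n : ℕ) : (phiC (1/4))^[n] x = psi^[n] (x - 1/2) + 1/2 := by
  induction n with
  | zero => simp
  | succ n ih =>
      rw [Function.iterate_succ_apply', Function.iterate_succ_apply', ih]
      simp only [phiC, psi]
      ring

theorem preper_quarter : {x : ℚ | Preper (1 / 4) x} = {1 / 2, -(1 / 2)} := by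
  ext x
  simp only [Set.mem_setOf_eq, Set.mem_insert_iff, Set.mem_singleton_iff]
  constructor
  · rintro ⟨m, n, hmn, heq⟩
    set w := x - 1/2 with hw
    have hpsi : psi^[n] w = psi^[m] w := by
      have h1 := conj x n
      have h2 := conj x m
      rw [h1, h2] at heq
      linarith
    -- denominator of w is 1
    have hden : w.den = 1 := by
      by_contra hd
      have hd2 : 2 ≤ w.den := by
        have := w.pos
        omega
      have := psi_iter_den w n
      have h2 := psi_iter_den w m
      rw [hpsi, h2] at this
      have := Nat.pow_right_injective hd2 this
      have := Nat.pow_right_injective (le_refl 2) this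
      omega
    have hwint : w = (w.num : ℚ) := by
      conv_lhs => rw [← Rat.num_div_den w]
      rw [hden]
      simp
    -- w.num is not ≥ 1
    have hn1 : ¬ (1 ≤ w.num) := by
      intro h
      apply not_pre_of_one_le w (by rw [hwint]; exact_mod_cast h)
      exact ⟨m, n, hmn, hpsi⟩
    -- w.num is not ≤ -2
    have hn2 : ¬ (w.num ≤ -2) := by
      intro h
      have hwle : w ≤ -2 := by rw [hwint]; exact_mod_cast h
      have h1 : (1:ℚ) ≤ psi w := by simp only [psi]; nlinarith
      apply not_pre_of_one_le (psi w) h1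
      refine ⟨m, n, hmn, ?_⟩
      rw [← Function.iterate_succ_apply, ← Function.iterate_succ_apply,
        Function.iterate_succ_apply', Function.iterate_succ_apply', hpsi]
    have : w.num = 0 ∨ w.num = -1 := by omega
    rcases this with h | h
    · left
      have : w = 0 := by rw [hwint, h]; norm_num
      rw [hw] at this
      linarith
    · right
      have : w = -1 := by rw [hwint, h]; norm_num
      rw [hw] at this
      linarith
  · rintro (rfl | rfl)
    · exact ⟨0, 1, by norm_num, by norm_num [phiC]⟩
    · refine ⟨1, 2, by norm_num, ?_⟩
      show (phiC (1/4))^[2] (-(1/2)) = (phiC (1/4))^[1] (-(1/2))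
      simp only [Function.iterate_succ_apply, Function.iterate_zero_apply, Function.iterate_one]
      norm_num [phiC]
end

section
/- The set of rational preperiodic points of φ(z) = z² - 3/4 acting on ℚ is exactly {1/2, -1/2, 3/2, -3/2}. -/
/-- Auxiliary: `x` avoids the four special points. -/
def BadPt (x : ℚ) : Prop :=
  x ≠ 1/2 ∧ x ≠ -(1/2) ∧ x ≠ 3/2 ∧ x ≠ -(3/2)

/-- Auxiliary size function. -/
def muQ (q : ℚ) : ℤ := |q.num| + (q.den : ℤ)

private lemma odd_sq_mod8 {n : ℤ} (h : n % 2 = 1) : n ^ 2 % 8 = 1 := by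
  obtain ⟨k, hk⟩ : ∃ k, n = 2*k+1 := ⟨n/2, by omega⟩
  have h2 : n^2 = 4*(k*(k+1)) + 1 := by rw [hk]; ring
  obtain ⟨m, hm⟩ : ∃ m, k*(k+1) = m + m := Int.even_mul_succ_self k
  omega

private lemma isCoprime_two {a : ℤ} (h : a % 2 = 1) : IsCoprime a (2:ℤ) :=
  ⟨1, -(a/2), by omega⟩

private lemma numden {a b : ℤ} (hb : 0 < b) (h : IsCoprime a b) {q : ℚ}
    (hq : q = (a:ℚ)/(b:ℚ)) : q.num = a ∧ (q.den:ℤ) = b := by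
  have hc : Nat.Coprime a.natAbs b.natAbs := Int.isCoprime_iff_gcd_eq_one.mp h
  exact ⟨hq ▸ Rat.num_div_eq_of_coprime hb hc, hq ▸ Rat.den_div_eq_of_coprime hb hc⟩

private lemma case_odd (x y : ℚ) (hy : y = phiC (-(3/4)) x) (n d : ℤ) (hd : 0 < d)
    (hcop : IsCoprime n d) (hdQ : (d:ℚ) ≠ 0) (hxeq : x = (n:ℚ)/(d:ℚ))
    (h1 : d % 2 = 1) :
    BadPt y ∧ |n| + d < |y.num| + (y.den:ℤ) := by
  obtain ⟨a, ha⟩ : ∃ a, a = 4*n^2 - 3*d^2 := ⟨_, rfl⟩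
  have h8d := odd_sq_mod8 h1
  have haodd : a % 2 = 1 := by omega
  have hbpos : (0:ℤ) < 4*d^2 := by positivity
  have hc2 : IsCoprime a 2 := isCoprime_two haodd
  have hcd : IsCoprime a d := by
    have h1' : IsCoprime (n^2) d := hcop.pow_left
    have h2' : IsCoprime (2:ℤ) d := (isCoprime_two h1).symm
    have h3' : IsCoprime (4*n^2) d := by
      have h := (h1'.mul_left h2').mul_left h2'
      rwa [show n^2*2*2 = 4*n^2 by ring] at h
    have h4' := h3'.add_mul_left_left (-3*d)
    rwa [show 4*n^2 + d*(-3*d) = a by rw [ha]; ring] at h4'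
  have hcab : IsCoprime a (4*d^2) := by
    have h := hc2.mul_right (hc2.mul_right (hcd.mul_right hcd))
    rwa [show (2:ℤ)*(2*(d*d)) = 4*d^2 by ring] at h
  have hyeq : y = ((a:ℤ):ℚ)/((4*d^2 : ℤ):ℚ) := by
    rw [hy, phiC, hxeq]; push_cast [ha]; field_simp; ring
  obtain ⟨hnum, hden⟩ := numden hbpos hcab hyeq
  have hden2 : ((y.den):ℤ) ≠ 2 := by rw [hden]; omega
  have h1a : 1 ≤ |a| := Int.one_le_abs (by omega)
  have h2a : a ≤ |a| := le_abs_self a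
  have hnn : n^2 = |n|^2 := (sq_abs n).symm
  have h0n : 0 ≤ |n| := abs_nonneg n
  refine ⟨⟨?_, ?_, ?_, ?_⟩, ?_⟩
  · intro h; apply hden2; rw [h]; norm_num
  · intro h; apply hden2; rw [h]; norm_num
  · intro h; apply hden2; rw [h]; norm_num
  · intro h; apply hden2; rw [h]; norm_num
  rw [hnum, hden]
  rcases le_or_gt d |n| with hcase | hcase
  · nlinarith [h2a, ha, hnn, mul_self_le_mul_self hd.le hcase, mul_pos hd hd]
  · nlinarith [h1a, hcase, hd, mul_nonneg (by omega : (0:ℤ) ≤ d-1) hd.le]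

private lemma case_even (x y : ℚ) (hy : y = phiC (-(3/4)) x) (n d c : ℤ) (hd : 0 < d)
    (hcop : IsCoprime n d) (hxeq : x = (n:ℚ)/(d:ℚ))
    (hc : d = 2*c) (hceven : c % 2 = 0) (hnodd : n % 2 = 1) :
    BadPt y ∧ |n| + d < |y.num| + (y.den:ℤ) := by
  have hcpos : 0 < c := by omega
  have hcQ : (c:ℚ) ≠ 0 := Int.cast_ne_zero.mpr hcpos.ne'
  have hcopnc : IsCoprime n c := by
    rw [hc] at hcop; exact hcop.of_mul_right_right
  obtain ⟨a, ha⟩ : ∃ a, a = n^2 - 3*c^2 := ⟨_, rfl⟩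
  have h8n := odd_sq_mod8 hnodd
  obtain ⟨g, hg⟩ : ∃ g, c = 2*g := ⟨c/2, by omega⟩
  have hc2g : c^2 = 4*g^2 := by rw [hg]; ring
  have haodd : a % 2 = 1 := by omega
  have hbpos : (0:ℤ) < 4*c^2 := by positivity
  have hc2 : IsCoprime a 2 := isCoprime_two haodd
  have hcd : IsCoprime a c := by
    have h1' : IsCoprime (n^2) c := hcopnc.pow_left
    have h4' := h1'.add_mul_left_left (-3*c)
    rwa [show n^2 + c*(-3*c) = a by rw [ha]; ring] at h4'
  have hcab : IsCoprime a (4*c^2) := by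
    have h := hc2.mul_right (hc2.mul_right (hcd.mul_right hcd))
    rwa [show (2:ℤ)*(2*(c*c)) = 4*c^2 by ring] at h
  have hyeq : y = ((a:ℤ):ℚ)/((4*c^2 : ℤ):ℚ) := by
    rw [hy, phiC, hxeq, hc]; push_cast [ha]; field_simp; ring
  obtain ⟨hnum, hden⟩ := numden hbpos hcab hyeq
  have hden2 : ((y.den):ℤ) ≠ 2 := by rw [hden]; omega
  have h1a : 1 ≤ |a| := Int.one_le_abs (by omega)
  have h2a : a ≤ |a| := le_abs_self a
  have hnn : n^2 = |n|^2 := (sq_abs n).symm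
  have h0n : 0 ≤ |n| := abs_nonneg n
  have hNodd : |n| % 2 = 1 := by have := abs_choice n; omega
  refine ⟨⟨?_, ?_, ?_, ?_⟩, ?_⟩
  · intro h; apply hden2; rw [h]; norm_num
  · intro h; apply hden2; rw [h]; norm_num
  · intro h; apply hden2; rw [h]; norm_num
  · intro h; apply hden2; rw [h]; norm_num
  rw [hnum, hden, hc]
  rcases le_or_gt (2*c) |n| with hcase | hcase
  · have hN5 : 5 ≤ |n| := by omega
    nlinarith [h2a, ha, hnn, mul_self_le_mul_self (by positivity : (0:ℤ) ≤ 2*c) hcase,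
      mul_nonneg (by omega : (0:ℤ) ≤ |n| - 5) h0n, hcpos]
  · nlinarith [h1a, hcase, sq_nonneg (2*c-1), hcpos]

private lemma case_two_odd (x y : ℚ) (hy : y = phiC (-(3/4)) x) (n d c : ℤ) (hd : 0 < d)
    (hx : BadPt x) (hxeq : x = (n:ℚ)/(d:ℚ)) (hcopnc : IsCoprime n c)
    (hc : d = 2*c) (hcodd : c % 2 = 1) (hnodd : n % 2 = 1) :
    BadPt y ∧ |n| + d < |y.num| + (y.den:ℤ) := by
  have hcpos : 0 < c := by omega
  have hcQ : (c:ℚ) ≠ 0 := Int.cast_ne_zero.mpr hcpos.ne'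
  have h8n := odd_sq_mod8 hnodd
  have h8c := odd_sq_mod8 hcodd
  obtain ⟨e, he⟩ : ∃ e, 2*e = n^2 - 3*c^2 := ⟨(n^2-3*c^2)/2, by omega⟩
  have heodd : e % 2 = 1 := by omega
  have hbpos : (0:ℤ) < 2*c^2 := by positivity
  have hce2 : IsCoprime e 2 := isCoprime_two heodd
  have hcec : IsCoprime e c := by
    have h1' : IsCoprime (n^2) c := hcopnc.pow_left
    rw [show n^2 = 2*e + c*(3*c) by linear_combination -he] at h1'
    exact h1'.of_add_mul_left_left.of_mul_left_right
  have hcab : IsCoprime e (2*c^2) := by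
    have h := hce2.mul_right (hcec.mul_right hcec)
    rwa [show (2:ℤ)*(c*c) = 2*c^2 by ring] at h
  have heQ : 2*(e:ℚ) = (n:ℚ)^2 - 3*(c:ℚ)^2 := by exact_mod_cast he
  have hyeq : y = ((e:ℤ):ℚ)/((2*c^2 : ℤ):ℚ) := by
    rw [hy, phiC, hxeq, hc]; push_cast; field_simp
    linear_combination (-4:ℚ) * heQ
  obtain ⟨hnum, hden⟩ := numden hbpos hcab hyeq
  have h1e : 1 ≤ |e| := Int.one_le_abs (by omega)
  have h2e : e ≤ |e| := le_abs_self e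
  have hnn : n^2 = |n|^2 := (sq_abs n).symm
  have h0n : 0 ≤ |n| := abs_nonneg n
  have hNodd : |n| % 2 = 1 := by have := abs_choice n; omega
  by_cases hc1 : c = 1
  · subst hc1
    have hxn : x = (n:ℚ)/2 := by rw [hxeq, hc]; norm_num
    have hn1 : n ≠ 1 := fun h => hx.1 (by rw [hxn, h]; norm_num)
    have hn2 : n ≠ -1 := fun h => hx.2.1 (by rw [hxn, h]; norm_num)
    have hn3 : n ≠ 3 := fun h => hx.2.2.1 (by rw [hxn, h]; norm_num)
    have hn4 : n ≠ -3 := fun h => hx.2.2.2 (by rw [hxn, h]; norm_num)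
    have hN5 : 5 ≤ |n| := by have := abs_choice n; omega
    have he11 : 11 ≤ e := by
      nlinarith [hN5, hnn, he, mul_self_le_mul_self (by norm_num : (0:ℤ) ≤ 5) hN5]
    refine ⟨⟨?_, ?_, ?_, ?_⟩, ?_⟩
    · intro h; rw [h] at hnum; norm_num at hnum; omega
    · intro h; rw [h] at hnum; norm_num at hnum; omega
    · intro h; rw [h] at hnum; norm_num at hnum; omega
    · intro h; rw [h] at hnum; norm_num at hnum; omega
    · rw [hnum, hden, hc]
      nlinarith [h2e, he, hnn, hN5, mul_nonneg (by omega : (0:ℤ) ≤ |n| - 5) h0n]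
  · have hc3 : 3 ≤ c := by omega
    have hden2 : ((y.den):ℤ) ≠ 2 := by
      rw [hden]; intro hcontra
      nlinarith [mul_le_mul hc3 hc3 (by norm_num) (by omega : (0:ℤ) ≤ c)]
    refine ⟨⟨?_, ?_, ?_, ?_⟩, ?_⟩
    · intro h; apply hden2; rw [h]; norm_num
    · intro h; apply hden2; rw [h]; norm_num
    · intro h; apply hden2; rw [h]; norm_num
    · intro h; apply hden2; rw [h]; norm_num
    rw [hnum, hden, hc]
    rcases le_or_gt (2*c) |n| with hcase | hcase
    · have hN7 : 2*c+1 ≤ |n| := by omega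
      have hN7' : 7 ≤ |n| := by omega
      nlinarith [h2e, he, hnn, mul_nonneg (by omega : (0:ℤ) ≤ |n| - 7) h0n,
        mul_nonneg (by omega : (0:ℤ) ≤ c - 3) (by omega : (0:ℤ) ≤ c - 1)]
    · nlinarith [h1e, hcase, mul_nonneg (by omega : (0:ℤ) ≤ c - 2) hcpos.le]

private lemma step (x : ℚ) (hx : BadPt x) :
    BadPt (phiC (-(3/4)) x) ∧ muQ x < muQ (phiC (-(3/4)) x) := by
  have hd : (0:ℤ) < (x.den:ℤ) := by exact_mod_cast x.pos
  have hcop : IsCoprime x.num ((x.den:ℤ)) := by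
    rw [Int.isCoprime_iff_gcd_eq_one]; simpa [Int.gcd] using x.reduced
  have hdQ : ((x.den:ℤ):ℚ) ≠ 0 := Int.cast_ne_zero.mpr hd.ne'
  have hxeq : x = (x.num:ℚ)/((x.den:ℤ):ℚ) := by exact_mod_cast (Rat.num_div_den x).symm
  have hmu : muQ x = |x.num| + (x.den:ℤ) := rfl
  have hmu2 : muQ (phiC (-(3/4)) x) =
      |(phiC (-(3/4)) x).num| + ((phiC (-(3/4)) x).den:ℤ) := rfl
  rcases Int.emod_two_eq (x.den:ℤ) with h1 | h1
  · -- den even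
    have hnodd : x.num % 2 = 1 := by
      by_contra h
      have h0 : x.num % 2 = 0 := by omega
      obtain ⟨n', hn'⟩ : ∃ k, x.num = 2*k := ⟨x.num/2, by omega⟩
      obtain ⟨d', hd'⟩ : ∃ k, (x.den:ℤ) = 2*k := ⟨(x.den:ℤ)/2, by omega⟩
      obtain ⟨u, v, huv⟩ := hcop
      have h21 : (2:ℤ) ∣ 1 := ⟨u*n' + v*d', by rw [← huv, hn', hd']; ring⟩
      norm_num at h21
    obtain ⟨c, hc⟩ : ∃ c, (x.den:ℤ) = 2*c := ⟨(x.den:ℤ)/2, by omega⟩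
    have hcopnc : IsCoprime x.num c := by
      rw [hc] at hcop; exact hcop.of_mul_right_right
    rcases Int.emod_two_eq c with h2 | h2
    · have := case_even x _ rfl x.num _ c hd hcop hxeq hc h2 hnodd
      rw [hmu, hmu2]; exact this
    · have := case_two_odd x _ rfl x.num _ c hd hx hxeq hcopnc hc h2 hnodd
      rw [hmu, hmu2]; exact this
  · have := case_odd x _ rfl x.num _ hd hcop hdQ hxeq h1
    rw [hmu, hmu2]; exact this

private lemma iter_step (x : ℚ) (hx : BadPt x) (k : ℕ) :
    BadPt ((phiC (-(3/4)))^[k] x) ∧ muQ x + k ≤ muQ ((phiC (-(3/4)))^[k] x) := by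
  induction k with
  | zero => simpa using hx
  | succ k ih =>
    obtain ⟨hb, hm⟩ := ih
    obtain ⟨hb', hm'⟩ := step _ hb
    rw [Function.iterate_succ_apply']
    refine ⟨hb', ?_⟩
    push_cast
    push_cast at hm
    omega

theorem preper_neg_three_quarters :
    {x : ℚ | Preper (-(3 / 4)) x} = {1 / 2, -(1 / 2), 3 / 2, -(3 / 2)} := by
  ext x
  simp only [Set.mem_setOf_eq, Set.mem_insert_iff, Set.mem_singleton_iff]
  constructor
  · intro hpre
    by_contra hbad
    push_neg at hbad
    have hb : BadPt x := ⟨hbad.1, hbad.2.1, hbad.2.2.1, hbad.2.2.2⟩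
    obtain ⟨m, k, hmk, heq⟩ := hpre
    have H1 := (iter_step x hb m).1
    have H2 := (iter_step _ H1 (k - m)).2
    rw [← Function.iterate_add_apply] at H2
    rw [show k - m + m = k from by omega, heq] at H2
    have hpos : 0 < k - m := by omega
    omega
  · rintro (rfl | rfl | rfl | rfl)
    · refine ⟨1, 2, by norm_num, ?_⟩
      simp only [Function.iterate_succ_apply, Function.iterate_zero_apply,
        Function.iterate_one]
      norm_num [phiC]
    · refine ⟨0, 1, by norm_num, ?_⟩
      simp only [Function.iterate_one, Function.iterate_zero_apply]
      norm_num [phiC]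
    · refine ⟨0, 1, by norm_num, ?_⟩
      simp only [Function.iterate_one, Function.iterate_zero_apply]
      norm_num [phiC]
    · refine ⟨1, 2, by norm_num, ?_⟩
      simp only [Function.iterate_succ_apply, Function.iterate_zero_apply,
        Function.iterate_one]
      norm_num [phiC]
end

section
/- Let p be a prime and c ∈ ℚ with s := v_p(c) ≤ -1 odd. Then for every x ∈ ℚ, v_p(φ_c(x)) ≤ s, and consequently v_p(φ_c^j(x)) ≤ 2^{j-1}·s for all j ≥ 1, where φ_c(z) = z² + c. In particular φ_c has no preperiodic points in ℚ. -/
theorem padic_val_odd_neg (p : ℕ) (hp : p.Prime) (c : ℚ)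
    (hs : padicValRat p c ≤ -1) (hodd : Odd (padicValRat p c)) :
    ∀ x : ℚ,
      padicValRat p (phiC c x) ≤ padicValRat p c ∧
      (∀ j : ℕ, 1 ≤ j →
        padicValRat p ((phiC c)^[j] x) ≤ 2 ^ (j - 1) * padicValRat p c) ∧
      ¬ Preper c x := by
  haveI : Fact p.Prime := ⟨hp⟩
  set s := padicValRat p c with hsdef
  have hc : c ≠ 0 := by
    intro h; rw [h, padicValRat.zero] at hsdef; omega
  -- key: v(y² + c) = min (2 v y) s
  have key : ∀ y : ℚ, padicValRat p (phiC c y) = min (2 * padicValRat p y) s := by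
    intro y
    by_cases hy : y = 0
    · subst hy
      simp only [phiC]
      rw [show (0:ℚ)^2 + c = c by ring, padicValRat.zero]
      simp only [mul_zero]
      omega
    · have hy2 : y ^ 2 ≠ 0 := pow_ne_zero _ hy
      have hv2 : padicValRat p (y ^ 2) = 2 * padicValRat p y := by
        rw [padicValRat.pow y]; push_cast; ring
      have hne : padicValRat p (y ^ 2) ≠ s := by
        rw [hv2]; rintro h
        rcases hodd with ⟨k, hk⟩; omega
      have hsum : y ^ 2 + c ≠ 0 := by
        intro h
        have hcy : c = -(y ^ 2) := by linarith
        exact hne (by rw [hsdef, hcy, padicValRat.neg])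
      show padicValRat p (y ^ 2 + c) = _
      rw [padicValRat.add_eq_min hsum hy2 hc hne, hv2]
  intro x
  -- first part
  have h1 : padicValRat p (phiC c x) ≤ s := by rw [key]; exact min_le_right _ _
  -- iterate bound
  have h2 : ∀ j : ℕ, 1 ≤ j → padicValRat p ((phiC c)^[j] x) ≤ 2 ^ (j - 1) * s := by
    intro j hj
    induction j with
    | zero => omega
    | succ n ih =>
      rcases Nat.eq_or_lt_of_le hj with h | h
      · simp only [← h]
        simpa using h1
      · have hn : 1 ≤ n := by omega
        have ihn := ih hn
        rw [Function.iterate_succ_apply', key]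
        have h2v : 2 * padicValRat p ((phiC c)^[n] x) ≤ 2 ^ n * s := by
          have : (2:ℤ) ^ n = 2 * 2 ^ (n - 1) := by
            rw [← pow_succ']; congr 1; omega
          rw [this, mul_assoc]
          omega
        simp only [Nat.add_sub_cancel]
        exact le_trans (min_le_left _ _) h2v
  refine ⟨h1, h2, ?_⟩
  -- strict decrease of valuation along orbit from index 1
  have hstrict : ∀ j : ℕ, 1 ≤ j →
      padicValRat p ((phiC c)^[j+1] x) < padicValRat p ((phiC c)^[j] x) := by
    intro j hj
    have hb := h2 j hj
    have hneg : padicValRat p ((phiC c)^[j] x) < 0 := by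
      have : (2:ℤ) ^ (j-1) * s ≤ -1 := by
        have h1' : (1:ℤ) ≤ 2 ^ (j-1) := one_le_pow₀ (by norm_num)
        nlinarith
      omega
    rw [Function.iterate_succ_apply', key]
    calc min (2 * padicValRat p ((phiC c)^[j] x)) s
        ≤ 2 * padicValRat p ((phiC c)^[j] x) := min_le_left _ _
      _ < padicValRat p ((phiC c)^[j] x) := by omega
  have hmono : ∀ m n : ℕ, 1 ≤ m → m < n →
      padicValRat p ((phiC c)^[n] x) < padicValRat p ((phiC c)^[m] x) := by
    intro m n hm hmn
    induction n with
    | zero => omega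
    | succ k ih =>
      rcases Nat.eq_or_lt_of_le (Nat.succ_le_of_lt hmn) with h | h
      · rw [← Nat.succ_eq_add_one, ← h] at *
        exact hstrict m hm
      · exact lt_trans (hstrict k (by omega)) (ih (by omega))
  rintro ⟨m, n, hmn, heq⟩
  have heq' : (phiC c)^[n+1] x = (phiC c)^[m+1] x := by
    rw [Function.iterate_succ_apply', Function.iterate_succ_apply', heq]
  have := hmono (m+1) (n+1) (by omega) (by omega)
  rw [heq'] at this
  exact lt_irrefl _ this
end

section
/- Let φ = f/g ∈ ℚ(z) with f, g ∈ ℤ[z] relatively prime and d = max(deg f, deg g) ≥ 2, and let R = Res(f, g) be the resultant. Then the function F(t) = max(|f(t)|, |g(t)|)/max(|t|^d, 1) on ℝ ∪ {∞} attains a positive minimum D, and for every x ∈ ℚ, h(φ(x)) ≥ d·h(x) + log(D/|R|), where h is the standard Weil height on ℙ¹(ℚ). -/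
open Polynomial
open Matrix

/-- The standard Weil height on `ℚ`: `h(m/n) = log max(|m|, n)` in lowest terms. -/
noncomputable def weilHeight (x : ℚ) : ℝ :=
  Real.log (max (|x.num| : ℝ) (x.den : ℝ))

/-- The resultant of `f` and `g`, both viewed as polynomials of degree `d`,
as the determinant of the `2d × 2d` Sylvester matrix. -/
noncomputable def sylRes (f g : Polynomial ℤ) (d : ℕ) : ℤ :=
  Matrix.det (Matrix.of fun i j : Fin (2 * d) =>
    if (i : ℕ) < d then
      (if (i : ℕ) ≤ (j : ℕ) ∧ (j : ℕ) ≤ (i : ℕ) + d then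
        f.coeff (d + (i : ℕ) - (j : ℕ)) else 0)
    else
      (if (i : ℕ) - d ≤ (j : ℕ) ∧ (j : ℕ) ≤ (i : ℕ) then
        g.coeff ((i : ℕ) - (j : ℕ)) else 0))


noncomputable def sylMat (f g : Polynomial ℤ) (d : ℕ) : Matrix (Fin (2 * d)) (Fin (2 * d)) ℤ :=
  Matrix.of fun i j : Fin (2 * d) =>
    if (i : ℕ) < d then
      (if (i : ℕ) ≤ (j : ℕ) ∧ (j : ℕ) ≤ (i : ℕ) + d then
        f.coeff (d + (i : ℕ) - (j : ℕ)) else 0)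
    else
      (if (i : ℕ) - d ≤ (j : ℕ) ∧ (j : ℕ) ≤ (i : ℕ) then
        g.coeff ((i : ℕ) - (j : ℕ)) else 0)

lemma syl_row_sum {A : Type*} [CommRing A] (φ : ℤ →+* A) (f g : Polynomial ℤ) (d : ℕ)
    (m n : A) (i : Fin (2 * d)) :
    (∑ j : Fin (2 * d), φ (sylMat f g d i j) * (m ^ (2 * d - 1 - (j : ℕ)) * n ^ (j : ℕ)))
      = if (i : ℕ) < d
        then m ^ (d - 1 - (i : ℕ)) * n ^ (i : ℕ) *
          ∑ k ∈ Finset.range (d + 1), φ (f.coeff k) * (m ^ k * n ^ (d - k))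
        else m ^ (2 * d - 1 - (i : ℕ)) * n ^ ((i : ℕ) - d) *
          ∑ k ∈ Finset.range (d + 1), φ (g.coeff k) * (m ^ k * n ^ (d - k)) := by
  have hi2d : (i : ℕ) < 2 * d := i.isLt
  by_cases hi : (i : ℕ) < d
  · simp only [hi, if_true]
    calc (∑ j : Fin (2 * d), φ (sylMat f g d i j) * (m ^ (2 * d - 1 - (j : ℕ)) * n ^ (j : ℕ)))
        = ∑ j : Fin (2 * d), (if (i : ℕ) ≤ (j : ℕ) ∧ (j : ℕ) ≤ (i : ℕ) + d then
            φ (f.coeff (d + (i : ℕ) - (j : ℕ))) * (m ^ (2 * d - 1 - (j : ℕ)) * n ^ (j : ℕ))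
            else 0) := by
          apply Finset.sum_congr rfl
          intro j _
          simp [sylMat, hi, apply_ite φ, ite_mul]
      _ = ∑ j ∈ Finset.range (2 * d), (if (i : ℕ) ≤ j ∧ j ≤ (i : ℕ) + d then
            φ (f.coeff (d + (i : ℕ) - j)) * (m ^ (2 * d - 1 - j) * n ^ j) else 0) :=
          Fin.sum_univ_eq_sum_range (fun j => if (i : ℕ) ≤ j ∧ j ≤ (i : ℕ) + d then
            φ (f.coeff (d + (i : ℕ) - j)) * (m ^ (2 * d - 1 - j) * n ^ j) else 0) (2 * d)
      _ = ∑ j ∈ Finset.Icc (i : ℕ) ((i : ℕ) + d),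
            φ (f.coeff (d + (i : ℕ) - j)) * (m ^ (2 * d - 1 - j) * n ^ j) := by
          rw [← Finset.sum_filter]
          apply Finset.sum_congr _ (fun _ _ => rfl)
          ext j
          simp only [Finset.mem_filter, Finset.mem_range, Finset.mem_Icc]
          omega
      _ = ∑ k ∈ Finset.range (d + 1),
            m ^ (d - 1 - (i : ℕ)) * n ^ (i : ℕ) * (φ (f.coeff k) * (m ^ k * n ^ (d - k))) := by
          apply Finset.sum_nbij' (fun j => (i : ℕ) + d - j) (fun k => (i : ℕ) + d - k)
          · intro j hj; simp only [Finset.mem_Icc] at hj; simp only [Finset.mem_range]; omega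
          · intro k hk; simp only [Finset.mem_range] at hk; simp only [Finset.mem_Icc]; omega
          · intro j hj; simp only [Finset.mem_Icc] at hj; omega
          · intro k hk; simp only [Finset.mem_range] at hk; omega
          · intro j hj
            simp only [Finset.mem_Icc] at hj
            set k := (i : ℕ) + d - j with hk
            have e1 : d + (i : ℕ) - j = k := by omega
            have e2 : 2 * d - 1 - j = (d - 1 - (i : ℕ)) + k := by omega
            have e3 : j = (i : ℕ) + (d - k) := by omega
            rw [e1, e2, e3, pow_add, pow_add]
            ring
      _ = m ^ (d - 1 - (i : ℕ)) * n ^ (i : ℕ) *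
            ∑ k ∈ Finset.range (d + 1), φ (f.coeff k) * (m ^ k * n ^ (d - k)) :=
          (Finset.mul_sum _ _ _).symm
  · simp only [hi, if_false]
    calc (∑ j : Fin (2 * d), φ (sylMat f g d i j) * (m ^ (2 * d - 1 - (j : ℕ)) * n ^ (j : ℕ)))
        = ∑ j : Fin (2 * d), (if (i : ℕ) - d ≤ (j : ℕ) ∧ (j : ℕ) ≤ (i : ℕ) then
            φ (g.coeff ((i : ℕ) - (j : ℕ))) * (m ^ (2 * d - 1 - (j : ℕ)) * n ^ (j : ℕ))
            else 0) := by
          apply Finset.sum_congr rfl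
          intro j _
          simp [sylMat, hi, apply_ite φ, ite_mul]
      _ = ∑ j ∈ Finset.range (2 * d), (if (i : ℕ) - d ≤ j ∧ j ≤ (i : ℕ) then
            φ (g.coeff ((i : ℕ) - j)) * (m ^ (2 * d - 1 - j) * n ^ j) else 0) :=
          Fin.sum_univ_eq_sum_range (fun j => if (i : ℕ) - d ≤ j ∧ j ≤ (i : ℕ) then
            φ (g.coeff ((i : ℕ) - j)) * (m ^ (2 * d - 1 - j) * n ^ j) else 0) (2 * d)
      _ = ∑ j ∈ Finset.Icc ((i : ℕ) - d) (i : ℕ),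
            φ (g.coeff ((i : ℕ) - j)) * (m ^ (2 * d - 1 - j) * n ^ j) := by
          rw [← Finset.sum_filter]
          apply Finset.sum_congr _ (fun _ _ => rfl)
          ext j
          simp only [Finset.mem_filter, Finset.mem_range, Finset.mem_Icc]
          omega
      _ = ∑ k ∈ Finset.range (d + 1),
            m ^ (2 * d - 1 - (i : ℕ)) * n ^ ((i : ℕ) - d) *
              (φ (g.coeff k) * (m ^ k * n ^ (d - k))) := by
          apply Finset.sum_nbij' (fun j => (i : ℕ) - j) (fun k => (i : ℕ) - k)
          · intro j hj; simp only [Finset.mem_Icc] at hj; simp only [Finset.mem_range]; omega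
          · intro k hk; simp only [Finset.mem_range] at hk; simp only [Finset.mem_Icc]; omega
          · intro j hj; simp only [Finset.mem_Icc] at hj; omega
          · intro k hk; simp only [Finset.mem_range] at hk; omega
          · intro j hj
            simp only [Finset.mem_Icc] at hj
            set k := (i : ℕ) - j with hk
            have e1 : 2 * d - 1 - j = (2 * d - 1 - (i : ℕ)) + k := by omega
            have e3 : j = ((i : ℕ) - d) + (d - k) := by omega
            rw [e1, e3, pow_add, pow_add]
            ring
      _ = m ^ (2 * d - 1 - (i : ℕ)) * n ^ ((i : ℕ) - d) *
            ∑ k ∈ Finset.range (d + 1), φ (g.coeff k) * (m ^ k * n ^ (d - k)) :=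
          (Finset.mul_sum _ _ _).symm

lemma sylRes_eq_det (f g : Polynomial ℤ) (d : ℕ) : sylRes f g d = (sylMat f g d).det := rfl

lemma mulVec_syl (f g : Polynomial ℤ) (d : ℕ) (m n : ℤ) (i : Fin (2 * d)) :
    (sylMat f g d *ᵥ (fun j : Fin (2 * d) => m ^ (2 * d - 1 - (j : ℕ)) * n ^ (j : ℕ))) i
      = if (i : ℕ) < d
        then m ^ (d - 1 - (i : ℕ)) * n ^ (i : ℕ) *
          ∑ k ∈ Finset.range (d + 1), f.coeff k * (m ^ k * n ^ (d - k))
        else m ^ (2 * d - 1 - (i : ℕ)) * n ^ ((i : ℕ) - d) *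
          ∑ k ∈ Finset.range (d + 1), g.coeff k * (m ^ k * n ^ (d - k)) := by
  have := syl_row_sum (RingHom.id ℤ) f g d m n i
  simpa [Matrix.mulVec, dotProduct] using this

lemma dvd_sylRes_mul (f g : Polynomial ℤ) (d : ℕ) (m n e : ℤ)
    (hF : e ∣ ∑ k ∈ Finset.range (d + 1), f.coeff k * (m ^ k * n ^ (d - k)))
    (hG : e ∣ ∑ k ∈ Finset.range (d + 1), g.coeff k * (m ^ k * n ^ (d - k)))
    (j : Fin (2 * d)) :
    e ∣ sylRes f g d * (m ^ (2 * d - 1 - (j : ℕ)) * n ^ (j : ℕ)) := by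
  set M := sylMat f g d
  set v : Fin (2 * d) → ℤ := fun j => m ^ (2 * d - 1 - (j : ℕ)) * n ^ (j : ℕ) with hv
  have h1 : M.adjugate *ᵥ (M *ᵥ v) = M.det • v := by
    rw [Matrix.mulVec_mulVec, Matrix.adjugate_mul]
    simp [Matrix.smul_mulVec, Matrix.one_mulVec]
  have h2 : sylRes f g d * v j = ∑ i : Fin (2 * d), M.adjugate j i * (M *ᵥ v) i := by
    rw [sylRes_eq_det]
    have := congrFun h1 j
    simp only [Pi.smul_apply, smul_eq_mul] at this
    rw [← this]
    rfl
  rw [h2]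
  apply Finset.dvd_sum
  intro i _
  have h3 := mulVec_syl f g d m n i
  rw [h3]
  by_cases hi : (i : ℕ) < d
  · simp only [hi, if_true]
    exact Dvd.dvd.mul_left (Dvd.dvd.mul_left hF _) _
  · simp only [hi, if_false]
    exact Dvd.dvd.mul_left (Dvd.dvd.mul_left hG _) _

lemma dvd_sylRes (f g : Polynomial ℤ) (d : ℕ) (hd2 : 2 ≤ d) (m n e : ℤ) (hmn : IsCoprime m n)
    (hF : e ∣ ∑ k ∈ Finset.range (d + 1), f.coeff k * (m ^ k * n ^ (d - k)))
    (hG : e ∣ ∑ k ∈ Finset.range (d + 1), g.coeff k * (m ^ k * n ^ (d - k))) :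
    e ∣ sylRes f g d := by
  have h0 : e ∣ sylRes f g d * m ^ (2 * d - 1) := by
    have := dvd_sylRes_mul f g d m n e hF hG ⟨0, by omega⟩
    simpa using this
  have h1 : e ∣ sylRes f g d * n ^ (2 * d - 1) := by
    have := dvd_sylRes_mul f g d m n e hF hG ⟨2 * d - 1, by omega⟩
    simpa using this
  obtain ⟨u, w, huw⟩ := (hmn.pow (m := 2 * d - 1) (n := 2 * d - 1))
  have heq : sylRes f g d = u * (sylRes f g d * m ^ (2 * d - 1)) +
      w * (sylRes f g d * n ^ (2 * d - 1)) := by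
    calc sylRes f g d = sylRes f g d * (u * m ^ (2 * d - 1) + w * n ^ (2 * d - 1)) := by
          rw [huw, mul_one]
      _ = _ := by ring
  rw [heq]
  exact dvd_add (Dvd.dvd.mul_left h0 u) (Dvd.dvd.mul_left h1 w)

lemma natDegree_mapQ (f : Polynomial ℤ) :
    (f.map (Int.castRingHom ℚ)).natDegree = f.natDegree :=
  Polynomial.natDegree_map_eq_of_injective Int.cast_injective f

lemma sylRes_ne_zero (f g : Polynomial ℤ) (d : ℕ) (hd : d = max f.natDegree g.natDegree)
    (hd2 : 2 ≤ d)
    (hcop : IsCoprime (f.map (Int.castRingHom ℚ)) (g.map (Int.castRingHom ℚ))) :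
    sylRes f g d ≠ 0 := by
  set φ := Int.castRingHom ℚ with hφ
  set fQ := f.map φ with hfQdef
  set gQ := g.map φ with hgQdef
  have hmapdeg_f : fQ.natDegree = f.natDegree := natDegree_mapQ f
  have hmapdeg_g : gQ.natDegree = g.natDegree := natDegree_mapQ g
  have hinj : Function.Injective (Polynomial.map φ) :=
    Polynomial.map_injective φ Int.cast_injective
  have hfQ : fQ ≠ 0 := by
    intro h
    have hu : IsUnit gQ := isCoprime_zero_left.mp (h ▸ hcop)
    have h1 : gQ.natDegree = 0 := Polynomial.natDegree_eq_zero_of_isUnit hu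
    have h2 : f = 0 := hinj (by simpa using h)
    have h3 : f.natDegree = 0 := by simp [h2]
    omega
  have hgQ : gQ ≠ 0 := by
    intro h
    have hu : IsUnit fQ := isCoprime_zero_right.mp (h ▸ hcop)
    have h1 : fQ.natDegree = 0 := Polynomial.natDegree_eq_zero_of_isUnit hu
    have h2 : g = 0 := hinj (by simpa using h)
    have h3 : g.natDegree = 0 := by simp [h2]
    omega
  intro h0
  have hdet : ((sylMat f g d).map (φ : ℤ → ℚ)).det = 0 := by
    rw [show (sylMat f g d).map (φ : ℤ → ℚ) = φ.mapMatrix (sylMat f g d) from rfl,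
      ← RingHom.map_det, ← sylRes_eq_det, h0, map_zero]
  obtain ⟨v, hv0, hvM⟩ := Matrix.exists_vecMul_eq_zero_iff.mpr hdet
  set a : Polynomial ℚ := ∑ i : Fin (2 * d),
    if (i : ℕ) < d then Polynomial.C (v i) * Polynomial.X ^ (d - 1 - (i : ℕ)) else 0 with ha
  set b : Polynomial ℚ := ∑ i : Fin (2 * d),
    if d ≤ (i : ℕ) then Polynomial.C (v i) * Polynomial.X ^ (2 * d - 1 - (i : ℕ)) else 0 with hb
  have hkey : a * fQ + b * gQ = 0 := by
    apply Polynomial.funext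
    intro t
    have hw : ∀ i : Fin (2 * d),
        ((sylMat f g d).map (φ : ℤ → ℚ) *ᵥ
          (fun j : Fin (2 * d) => t ^ (2 * d - 1 - (j : ℕ)) * (1:ℚ) ^ (j : ℕ))) i
        = if (i : ℕ) < d
          then t ^ (d - 1 - (i : ℕ)) * (1:ℚ) ^ (i : ℕ) *
            ∑ k ∈ Finset.range (d + 1), φ (f.coeff k) * (t ^ k * (1:ℚ) ^ (d - k))
          else t ^ (2 * d - 1 - (i : ℕ)) * (1:ℚ) ^ ((i : ℕ) - d) *
            ∑ k ∈ Finset.range (d + 1), φ (g.coeff k) * (t ^ k * (1:ℚ) ^ (d - k)) := by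
      intro i
      have := syl_row_sum φ f g d t 1 i
      simpa [Matrix.mulVec, dotProduct, Matrix.map_apply] using this
    have hdot : v ⬝ᵥ ((sylMat f g d).map (φ : ℤ → ℚ) *ᵥ
        (fun j : Fin (2 * d) => t ^ (2 * d - 1 - (j : ℕ)) * (1:ℚ) ^ (j : ℕ))) = 0 := by
      rw [Matrix.dotProduct_mulVec, hvM]
      simp [dotProduct]
    have hfsum : ∑ k ∈ Finset.range (d + 1), φ (f.coeff k) * t ^ k
        = fQ.eval t := by
      rw [Polynomial.eval_eq_sum_range' (n := d + 1) (by rw [hmapdeg_f]; omega)]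
      apply Finset.sum_congr rfl
      intro k _
      rw [hfQdef, Polynomial.coeff_map]
    have hgsum : ∑ k ∈ Finset.range (d + 1), φ (g.coeff k) * t ^ k
        = gQ.eval t := by
      rw [Polynomial.eval_eq_sum_range' (n := d + 1) (by rw [hmapdeg_g]; omega)]
      apply Finset.sum_congr rfl
      intro k _
      rw [hgQdef, Polynomial.coeff_map]
    have heval : Polynomial.eval t (a * fQ + b * gQ)
        = ∑ i : Fin (2 * d), v i *
            (if (i : ℕ) < d then t ^ (d - 1 - (i : ℕ)) * fQ.eval t
             else t ^ (2 * d - 1 - (i : ℕ)) * gQ.eval t) := by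
      rw [Polynomial.eval_add, Polynomial.eval_mul, Polynomial.eval_mul, ha, hb,
        Polynomial.eval_finset_sum, Polynomial.eval_finset_sum,
        Finset.sum_mul, Finset.sum_mul, ← Finset.sum_add_distrib]
      apply Finset.sum_congr rfl
      intro i _
      by_cases hi : (i : ℕ) < d
      · simp [hi, Nat.not_le.mpr hi]
        ring
      · simp [hi, Nat.le_of_not_lt (by exact hi)]
        ring
    rw [heval, Polynomial.eval_zero]
    rw [← hdot]
    simp only [dotProduct]
    apply Finset.sum_congr rfl
    intro i _
    rw [hw i]
    by_cases hi : (i : ℕ) < d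
    · simp only [hi, if_true, one_pow, mul_one, hfsum]
    · simp only [hi, if_false, one_pow, mul_one, hgsum]
  -- coefficients of a and b recover v
  have ha_coeff : ∀ i : Fin (2 * d), (i : ℕ) < d → a.coeff (d - 1 - (i : ℕ)) = v i := by
    intro i₀ hi₀
    rw [ha, Polynomial.finset_sum_coeff]
    rw [Finset.sum_eq_single i₀]
    · simp [hi₀, Polynomial.coeff_X_pow]
    · intro i _ hne
      by_cases hi : (i : ℕ) < d
      · simp only [hi, if_true, Polynomial.coeff_C_mul, Polynomial.coeff_X_pow]
        have : ¬ (d - 1 - (i₀ : ℕ) = d - 1 - (i : ℕ)) := by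
          have : (i : ℕ) ≠ (i₀ : ℕ) := fun h => hne (Fin.ext h)
          omega
        simp [this]
      · simp [hi]
    · intro h
      exact absurd (Finset.mem_univ i₀) h
  have hb_coeff : ∀ i : Fin (2 * d), d ≤ (i : ℕ) → b.coeff (2 * d - 1 - (i : ℕ)) = v i := by
    intro i₀ hi₀
    rw [hb, Polynomial.finset_sum_coeff]
    rw [Finset.sum_eq_single i₀]
    · simp [hi₀, Polynomial.coeff_X_pow]
    · intro i _ hne
      by_cases hi : d ≤ (i : ℕ)
      · simp only [hi, if_true, Polynomial.coeff_C_mul, Polynomial.coeff_X_pow]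
        have : ¬ (2 * d - 1 - (i₀ : ℕ) = 2 * d - 1 - (i : ℕ)) := by
          have h1 : (i : ℕ) ≠ (i₀ : ℕ) := fun h => hne (Fin.ext h)
          have h2 : (i : ℕ) < 2 * d := i.isLt
          have h3 : (i₀ : ℕ) < 2 * d := i₀.isLt
          omega
        simp [this]
      · simp [hi]
    · intro h
      exact absurd (Finset.mem_univ i₀) h
  have hadeg : a.natDegree ≤ d - 1 := by
    apply Polynomial.natDegree_sum_le_of_forall_le
    intro i _
    by_cases hi : (i : ℕ) < d
    · simp only [hi, if_true]
      exact (Polynomial.natDegree_C_mul_le _ _).trans (by simp)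
    · simp [hi]
  have hbdeg : b.natDegree ≤ d - 1 := by
    apply Polynomial.natDegree_sum_le_of_forall_le
    intro i _
    by_cases hi : d ≤ (i : ℕ)
    · simp only [hi, if_true]
      refine (Polynomial.natDegree_C_mul_le _ _).trans ?_
      simp only [Polynomial.natDegree_X_pow]
      have := i.isLt
      omega
    · simp [hi]
  have hab : a * fQ = -(b * gQ) := by linear_combination hkey
  by_cases hA : a = 0
  · have hB : b = 0 := by
      have : b * gQ = 0 := by
        have := hkey
        rw [hA, zero_mul, zero_add] at this
        exact this
      rcases mul_eq_zero.mp this with h | h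
      · exact h
      · exact absurd h hgQ
    apply hv0
    funext i
    by_cases hi : (i : ℕ) < d
    · rw [← ha_coeff i hi, hA]; simp
    · rw [← hb_coeff i (Nat.le_of_not_lt hi), hB]; simp
  · have hB : b ≠ 0 := by
      intro hb0
      rw [hb0, zero_mul, neg_zero] at hab
      rcases mul_eq_zero.mp hab with h | h
      · exact hA h
      · exact hfQ h
    have hga : gQ ∣ a := by
      have hdvd : gQ ∣ a * fQ := ⟨-b, by linear_combination hkey⟩
      exact (hcop.symm).dvd_of_dvd_mul_right hdvd
    have hfb : fQ ∣ b := by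
      have hdvd : fQ ∣ b * gQ := ⟨-a, by linear_combination hkey⟩
      exact hcop.dvd_of_dvd_mul_right hdvd
    have h1 : gQ.natDegree ≤ d - 1 :=
      le_trans (Polynomial.natDegree_le_of_dvd hga hA) hadeg
    have h2 : fQ.natDegree ≤ d - 1 :=
      le_trans (Polynomial.natDegree_le_of_dvd hfb hB) hbdeg
    rw [hmapdeg_f] at h2
    rw [hmapdeg_g] at h1
    omega

lemma aeval_real_eq_sum (f : Polynomial ℤ) (d : ℕ) (hdeg : f.natDegree < d + 1) (t : ℝ) :
    (Polynomial.aeval t f : ℝ) = ∑ k ∈ Finset.range (d + 1), (f.coeff k : ℝ) * t ^ k := by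
  rw [Polynomial.aeval_eq_sum_range' hdeg]
  apply Finset.sum_congr rfl
  intro k _
  simp [zsmul_eq_mul]

lemma bezout_real (f g : Polynomial ℤ)
    (hcop : IsCoprime (f.map (Int.castRingHom ℚ)) (g.map (Int.castRingHom ℚ))) (t : ℝ) :
    ¬ ((Polynomial.aeval t f : ℝ) = 0 ∧ (Polynomial.aeval t g : ℝ) = 0) := by
  rintro ⟨hf0, hg0⟩
  obtain ⟨a, b, hab⟩ := hcop
  have hmap := congrArg (fun p : Polynomial ℚ =>
    Polynomial.eval t (p.map (algebraMap ℚ ℝ))) hab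
  simp only [Polynomial.map_add, Polynomial.map_mul, Polynomial.map_one, Polynomial.eval_add,
    Polynomial.eval_mul, Polynomial.eval_one, Polynomial.map_map] at hmap
  have hf : Polynomial.eval t (f.map ((algebraMap ℚ ℝ).comp (Int.castRingHom ℚ)))
      = (Polynomial.aeval t f : ℝ) := by
    rw [Polynomial.aeval_def, Polynomial.eval₂_eq_eval_map]
    congr 1
  have hg : Polynomial.eval t (g.map ((algebraMap ℚ ℝ).comp (Int.castRingHom ℚ)))
      = (Polynomial.aeval t g : ℝ) := by
    rw [Polynomial.aeval_def, Polynomial.eval₂_eq_eval_map]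
    congr 1
  rw [hf, hg, hf0, hg0] at hmap
  simp at hmap

lemma F_pos (f g : Polynomial ℤ) (d : ℕ)
    (hcop : IsCoprime (f.map (Int.castRingHom ℚ)) (g.map (Int.castRingHom ℚ))) (t : ℝ) :
    0 < max |(Polynomial.aeval t f : ℝ)| |(Polynomial.aeval t g : ℝ)| / max (|t| ^ d) 1 := by
  apply div_pos
  · have h0 : (0:ℝ) ≤ max |(Polynomial.aeval t f : ℝ)| |(Polynomial.aeval t g : ℝ)| :=
      le_max_of_le_left (abs_nonneg _)
    rcases h0.lt_or_eq with h | h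
    · exact h
    · exfalso
      have hA : |(Polynomial.aeval t f : ℝ)| = 0 :=
        le_antisymm (h ▸ le_max_left _ _) (abs_nonneg _)
      have hB : |(Polynomial.aeval t g : ℝ)| = 0 :=
        le_antisymm (h ▸ le_max_right _ _) (abs_nonneg _)
      exact bezout_real f g hcop t ⟨abs_eq_zero.mp hA, abs_eq_zero.mp hB⟩
  · exact lt_of_lt_of_le one_pos (le_max_right _ _)

open Filter Topology in
lemma tendsto_F (f g : Polynomial ℤ) (d : ℕ) (hdf : f.natDegree < d + 1)
    (hdg : g.natDegree < d + 1) :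
    Filter.Tendsto
      (fun t : ℝ => max |Polynomial.aeval t f| |Polynomial.aeval t g| / max (|t| ^ d) 1)
      (Filter.cocompact ℝ)
      (𝓝 (max (|((f.coeff d : ℤ) : ℝ)|) (|((g.coeff d : ℤ) : ℝ)|))) := by
  classical
  set Qf : Polynomial ℝ := ∑ k ∈ Finset.range (d + 1),
    Polynomial.C ((f.coeff k : ℤ) : ℝ) * Polynomial.X ^ (d - k) with hQf
  set Qg : Polynomial ℝ := ∑ k ∈ Finset.range (d + 1),
    Polynomial.C ((g.coeff k : ℤ) : ℝ) * Polynomial.X ^ (d - k) with hQg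
  have heval0 : ∀ (p : Polynomial ℤ),
      Polynomial.eval 0 (∑ k ∈ Finset.range (d + 1),
        Polynomial.C ((p.coeff k : ℤ) : ℝ) * Polynomial.X ^ (d - k)) = (p.coeff d : ℝ) := by
    intro p
    rw [Polynomial.eval_finset_sum, Finset.sum_eq_single d]
    · simp
    · intro k hk hne
      simp only [Finset.mem_range] at hk
      simp [zero_pow (by omega : d - k ≠ 0)]
    · intro h
      exact absurd (Finset.self_mem_range_succ d) h
  have hQinv : ∀ (p : Polynomial ℤ), p.natDegree < d + 1 → ∀ t : ℝ, t ≠ 0 →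
      Polynomial.eval t⁻¹ (∑ k ∈ Finset.range (d + 1),
        Polynomial.C ((p.coeff k : ℤ) : ℝ) * Polynomial.X ^ (d - k)) * t ^ d
      = Polynomial.aeval t p := by
    intro p hp t ht0
    rw [Polynomial.eval_finset_sum, Finset.sum_mul, aeval_real_eq_sum p d hp t]
    apply Finset.sum_congr rfl
    intro k hk
    simp only [Finset.mem_range] at hk
    have hsplit : t ^ d = t ^ (d - k) * t ^ k := by
      rw [← pow_add]
      congr 1
      omega
    rw [Polynomial.eval_mul, Polynomial.eval_C, Polynomial.eval_pow, Polynomial.eval_X,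
      hsplit, inv_pow]
    rw [mul_assoc, inv_mul_cancel_left₀ (pow_ne_zero _ ht0)]
  have hG : Continuous fun u : ℝ => max |Polynomial.eval u Qf| |Polynomial.eval u Qg| :=
    (Qf.continuous.abs.max Qg.continuous.abs)
  have h1 : Filter.Tendsto (fun t : ℝ => max |Polynomial.eval t⁻¹ Qf| |Polynomial.eval t⁻¹ Qg|)
      (Bornology.cobounded ℝ)
      (𝓝 (max (|((f.coeff d : ℤ) : ℝ)|) (|((g.coeff d : ℤ) : ℝ)|))) := by
    have h2 := (hG.tendsto 0).comp tendsto_inv₀_cobounded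
    have e1 : Polynomial.eval (0:ℝ) Qf = ((f.coeff d : ℤ) : ℝ) := heval0 f
    have e2 : Polynomial.eval (0:ℝ) Qg = ((g.coeff d : ℤ) : ℝ) := heval0 g
    simp only [Function.comp_def, e1, e2] at h2
    exact h2
  rw [← Metric.cobounded_eq_cocompact]
  apply h1.congr'
  filter_upwards [eventually_cobounded_le_norm (1:ℝ)] with t ht
  rw [Real.norm_eq_abs] at ht
  have ht0 : t ≠ 0 := by
    intro h
    rw [h, abs_zero] at ht
    linarith
  have htd : (1:ℝ) ≤ |t| ^ d := one_le_pow₀ ht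
  have htdpos : (0:ℝ) < |t| ^ d := lt_of_lt_of_le one_pos htd
  have hmax : max (|t| ^ d) 1 = |t| ^ d := max_eq_left htd
  have hf0 : Polynomial.eval t⁻¹ Qf * t ^ d = Polynomial.aeval t f := hQinv f hdf t ht0
  have hg0 : Polynomial.eval t⁻¹ Qg * t ^ d = Polynomial.aeval t g := hQinv g hdg t ht0
  have hf1 : |Polynomial.eval t⁻¹ Qf| = |Polynomial.aeval t f| / |t| ^ d := by
    rw [eq_div_iff (ne_of_gt htdpos), ← abs_pow, ← abs_mul, hf0]
  have hg1 : |Polynomial.eval t⁻¹ Qg| = |Polynomial.aeval t g| / |t| ^ d := by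
    rw [eq_div_iff (ne_of_gt htdpos), ← abs_pow, ← abs_mul, hg0]
  rw [hf1, hg1, hmax, max_div_div_right (le_of_lt htdpos)]

open Filter Topology in
lemma exists_least_D (f g : Polynomial ℤ) (d : ℕ) (hd : d = max f.natDegree g.natDegree)
    (hd2 : 2 ≤ d)
    (hcop : IsCoprime (f.map (Int.castRingHom ℚ)) (g.map (Int.castRingHom ℚ))) :
    ∃ D : ℝ, 0 < D ∧
      IsLeast
        (insert (max (|((f.coeff d : ℤ) : ℝ)|) (|((g.coeff d : ℤ) : ℝ)|))
          (Set.range fun t : ℝ =>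
            max |Polynomial.aeval t f| |Polynomial.aeval t g| /
              max (|t| ^ d) 1)) D := by
  set c : ℝ := max (|((f.coeff d : ℤ) : ℝ)|) (|((g.coeff d : ℤ) : ℝ)|) with hc
  set F : ℝ → ℝ := fun t =>
    max |Polynomial.aeval t f| |Polynomial.aeval t g| / max (|t| ^ d) 1 with hF
  have hdf : f.natDegree < d + 1 := by
    have := le_max_left f.natDegree g.natDegree
    omega
  have hdg : g.natDegree < d + 1 := by
    have := le_max_right f.natDegree g.natDegree
    omega
  have hFc : Filter.Tendsto F (Filter.cocompact ℝ) (𝓝 c) := tendsto_F f g d hdf hdg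
  have hFpos : ∀ t, 0 < F t := fun t => F_pos f g d hcop t
  have hcpos : 0 < c := by
    have hone : f.natDegree = d ∨ g.natDegree = d := by omega
    rcases hone with h | h
    · have hf0 : f ≠ 0 := by
        intro h0
        rw [h0] at h
        simp at h
        omega
      have : f.coeff d ≠ 0 := by
        rw [← h]
        exact Polynomial.leadingCoeff_ne_zero.mpr hf0
      have : (0:ℝ) < |((f.coeff d : ℤ) : ℝ)| := by
        rw [abs_pos]
        exact_mod_cast this
      exact lt_of_lt_of_le this (le_max_left _ _)
    · have hg0 : g ≠ 0 := by
        intro h0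
        rw [h0] at h
        simp at h
        omega
      have : g.coeff d ≠ 0 := by
        rw [← h]
        exact Polynomial.leadingCoeff_ne_zero.mpr hg0
      have : (0:ℝ) < |((g.coeff d : ℤ) : ℝ)| := by
        rw [abs_pos]
        exact_mod_cast this
      exact lt_of_lt_of_le this (le_max_right _ _)
  have hFcont : Continuous F := by
    apply Continuous.div
    · exact (Polynomial.continuous_aeval f).abs.max (Polynomial.continuous_aeval g).abs
    · exact (continuous_abs.pow d).max continuous_const
    · intro t
      exact ne_of_gt (lt_of_lt_of_le one_pos (le_max_right _ _))
  by_cases hcase : ∀ t, c ≤ F t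
  · refine ⟨c, hcpos, Set.mem_insert _ _, ?_⟩
    rintro y (rfl | ⟨t, rfl⟩)
    · exact le_refl _
    · exact hcase t
  · push_neg at hcase
    obtain ⟨t0, ht0⟩ := hcase
    have hev : ∀ᶠ t in Filter.cocompact ℝ, F t0 ≤ F t := by
      filter_upwards [hFc.eventually (eventually_gt_nhds ht0)] with t ht
      exact le_of_lt ht
    obtain ⟨t1, ht1⟩ := hFcont.exists_forall_le' t0 hev
    refine ⟨F t1, hFpos t1, Set.mem_insert_of_mem _ ⟨t1, rfl⟩, ?_⟩
    rintro y (rfl | ⟨t, rfl⟩)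
    · exact le_of_lt (lt_of_le_of_lt (ht1 t0) ht0)
    · exact ht1 t

lemma aeval_rat_mul (f : Polynomial ℤ) (d : ℕ) (hdeg : f.natDegree < d + 1) (x : ℚ) :
    (Polynomial.aeval x f) * (x.den : ℚ) ^ d
      = ((∑ k ∈ Finset.range (d + 1),
          f.coeff k * (x.num ^ k * (x.den : ℤ) ^ (d - k)) : ℤ) : ℚ) := by
  have hden : ((x.den : ℚ)) ≠ 0 := Nat.cast_ne_zero.mpr x.den_nz
  rw [Polynomial.aeval_eq_sum_range' hdeg, Finset.sum_mul]
  push_cast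
  apply Finset.sum_congr rfl
  intro k hk
  simp only [Finset.mem_range] at hk
  have hsplit : ((x.den : ℚ)) ^ d = (x.den : ℚ) ^ k * (x.den : ℚ) ^ (d - k) := by
    rw [← pow_add]
    congr 1
    omega
  have hnum : (x.num : ℚ) = x * (x.den : ℚ) := by
    have h := Rat.num_div_den x
    rw [div_eq_iff hden] at h
    rw [h]
  rw [hsplit, hnum, mul_pow, zsmul_eq_mul]
  push_cast
  ring

lemma max_pow_real (a b : ℝ) (ha : 0 ≤ a) (hb : 0 ≤ b) (d : ℕ) :
    max a b ^ d = max (a ^ d) (b ^ d) := by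
  rcases le_total a b with h | h
  · rw [max_eq_right h, max_eq_right (pow_le_pow_left₀ ha h d)]
  · rw [max_eq_left h, max_eq_left (pow_le_pow_left₀ hb h d)]

lemma height_bound (f g : Polynomial ℤ) (d : ℕ)
    (hd : d = max f.natDegree g.natDegree) (hd2 : 2 ≤ d)
    (hcop : IsCoprime (f.map (Int.castRingHom ℚ)) (g.map (Int.castRingHom ℚ)))
    (R : ℤ) (hR : R = sylRes f g d) (D : ℝ) (hDpos : 0 < D)
    (hlb : ∀ t : ℝ, D ≤ max |Polynomial.aeval t f| |Polynomial.aeval t g| / max (|t| ^ d) 1)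
    (x : ℚ) :
    weilHeight ((Polynomial.aeval x f) / (Polynomial.aeval x g)) ≥
      d * weilHeight x + Real.log (D / |(R : ℝ)|) := by
  have hRne : R ≠ 0 := hR ▸ sylRes_ne_zero f g d hd hd2 hcop
  have hRabs : (0:ℝ) < |(R:ℝ)| := abs_pos.mpr (by exact_mod_cast hRne)
  set m : ℤ := x.num with hm
  set n : ℤ := (x.den : ℤ) with hn
  have hdenpos : 0 < x.den := x.pos
  have hn1 : (1:ℤ) ≤ n := by
    have : (0:ℤ) < n := by rw [hn]; exact_mod_cast hdenpos
    omega
  have hnQ : ((x.den : ℚ)) ≠ 0 := Nat.cast_ne_zero.mpr x.den_nz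
  have hnR : ((x.den : ℝ)) ≠ 0 := Nat.cast_ne_zero.mpr x.den_nz
  have hnRpos : (0:ℝ) < (x.den : ℝ) := Nat.cast_pos.mpr hdenpos
  have hmn : IsCoprime m n := by
    rw [Int.isCoprime_iff_gcd_eq_one]
    exact x.reduced
  set Fv : ℤ := ∑ k ∈ Finset.range (d + 1), f.coeff k * (m ^ k * n ^ (d - k)) with hFvdef
  set Gv : ℤ := ∑ k ∈ Finset.range (d + 1), g.coeff k * (m ^ k * n ^ (d - k)) with hGvdef
  have hdf : f.natDegree < d + 1 := by
    have := le_max_left f.natDegree g.natDegree; omega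
  have hdg : g.natDegree < d + 1 := by
    have := le_max_right f.natDegree g.natDegree; omega
  have hFq : (Polynomial.aeval x f) * (x.den : ℚ) ^ d = (Fv : ℚ) := aeval_rat_mul f d hdf x
  have hGq : (Polynomial.aeval x g) * (x.den : ℚ) ^ d = (Gv : ℚ) := aeval_rat_mul g d hdg x
  have hfx : (Polynomial.aeval x f) = (Fv : ℚ) / (x.den : ℚ) ^ d :=
    (eq_div_iff (pow_ne_zero _ hnQ)).mpr hFq
  have hgx : (Polynomial.aeval x g) = (Gv : ℚ) / (x.den : ℚ) ^ d :=
    (eq_div_iff (pow_ne_zero _ hnQ)).mpr hGq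
  set Mr : ℝ := max (|x.num| : ℝ) (x.den : ℝ) with hMr
  have hM1 : (1:ℝ) ≤ Mr := le_trans (by exact_mod_cast hdenpos) (le_max_right _ _)
  have hMpos : (0:ℝ) < Mr := lt_of_lt_of_le one_pos hM1
  have hMdpos : (0:ℝ) < Mr ^ d := pow_pos hMpos d
  -- the key real inequality
  have hcastf : (Polynomial.aeval ((x:ℝ)) f) = ((Polynomial.aeval x f : ℚ) : ℝ) := by
    rw [show ((x:ℝ)) = algebraMap ℚ ℝ x from rfl, Polynomial.aeval_algebraMap_apply]
    exact eq_ratCast (algebraMap ℚ ℝ) _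
  have hcastg : (Polynomial.aeval ((x:ℝ)) g) = ((Polynomial.aeval x g : ℚ) : ℝ) := by
    rw [show ((x:ℝ)) = algebraMap ℚ ℝ x from rfl, Polynomial.aeval_algebraMap_apply]
    exact eq_ratCast (algebraMap ℚ ℝ) _
  have habsx : |(x:ℝ)| = (|x.num| : ℝ) / (x.den : ℝ) := by
    rw [Rat.cast_def, abs_div, abs_of_pos hnRpos]
  have key : D * Mr ^ d ≤ max (|(Fv:ℝ)|) (|(Gv:ℝ)|) := by
    have ht := hlb (x : ℝ)
    have hmd : (0:ℝ) < max (|(x:ℝ)| ^ d) 1 := lt_of_lt_of_le one_pos (le_max_right _ _)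
    rw [le_div_iff₀ hmd] at ht
    have hpow : (0:ℝ) ≤ (x.den : ℝ) ^ d := le_of_lt (pow_pos hnRpos d)
    have h2 := mul_le_mul_of_nonneg_right ht hpow
    calc D * Mr ^ d
        = D * (max (|(x:ℝ)| ^ d) 1 * (x.den : ℝ) ^ d) := by
          congr 1
          rw [max_mul_of_nonneg _ _ hpow, one_mul, habsx, div_pow,
            div_mul_cancel₀ _ (pow_ne_zero d hnR), hMr,
            max_pow_real _ _ (by positivity) (le_of_lt hnRpos)]
      _ = D * max (|(x:ℝ)| ^ d) 1 * (x.den : ℝ) ^ d := by ring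
      _ ≤ max |Polynomial.aeval ((x:ℝ)) f| |Polynomial.aeval ((x:ℝ)) g| * (x.den : ℝ) ^ d := h2
      _ = max (|(Fv:ℝ)|) (|(Gv:ℝ)|) := by
          rw [max_mul_of_nonneg _ _ hpow, hcastf, hcastg, hfx, hgx]
          congr 1
          · push_cast
            rw [abs_div, abs_pow, abs_of_pos hnRpos, div_mul_cancel₀ _ (pow_ne_zero d hnR)]
          · push_cast
            rw [abs_div, abs_pow, abs_of_pos hnRpos, div_mul_cancel₀ _ (pow_ne_zero d hnR)]
  have hnotboth : ¬ (Fv = 0 ∧ Gv = 0) := by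
    rintro ⟨h1, h2⟩
    rw [h1, h2] at key
    simp only [Int.cast_zero, abs_zero, max_self] at key
    nlinarith
  -- reduce to an integer k dividing both Fv and Gv
  set q : ℚ := (Polynomial.aeval x f) / (Polynomial.aeval x g) with hq
  have hqden1 : (1:ℝ) ≤ (q.den : ℝ) := by exact_mod_cast q.pos
  obtain ⟨k, hk0, hkF, hkG, hmain⟩ :
      ∃ k : ℤ, k ≠ 0 ∧ k ∣ Fv ∧ k ∣ Gv ∧
        max (|(q.num:ℝ)|) (q.den : ℝ) * |(k:ℝ)| = max (|(Fv:ℝ)|) (|(Gv:ℝ)|) := by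
    by_cases hGv : Gv = 0
    · have hFv0 : Fv ≠ 0 := fun h => hnotboth ⟨h, hGv⟩
      have hq0 : q = 0 := by
        rw [hq, hgx, hGv]
        simp
      refine ⟨Fv, hFv0, dvd_refl _, hGv ▸ dvd_zero _, ?_⟩
      rw [hq0, hGv]
      simp
    · have hGvQ : ((Gv:ℚ)) ≠ 0 := Int.cast_ne_zero.mpr hGv
      have hqFG : q = (Fv : ℚ) / (Gv : ℚ) := by
        rw [hq, hfx, hgx, div_div_div_comm, div_self (pow_ne_zero d hnQ), div_one]
      have hqd0 : ((q.den : ℚ)) ≠ 0 := Nat.cast_ne_zero.mpr q.den_nz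
      have hcross : q.num * Gv = Fv * (q.den : ℤ) := by
        have h1 : ((q.num : ℚ)) / (q.den : ℚ) = (Fv : ℚ) / (Gv : ℚ) := by
          rw [Rat.num_div_den, hqFG]
        rw [div_eq_div_iff hqd0 hGvQ] at h1
        exact_mod_cast h1
      have hdvd : (q.den : ℤ) ∣ Gv := by
        have h2 : (q.den : ℤ) ∣ Gv * q.num := ⟨Fv, by linarith [hcross]⟩
        have hqcop : IsCoprime (q.den : ℤ) q.num := by
          have h4 : Int.gcd q.num (q.den : ℤ) = 1 := by simpa [Int.gcd] using q.reduced
          exact (Int.isCoprime_iff_gcd_eq_one.mpr h4).symm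
        exact hqcop.dvd_of_dvd_mul_right h2
      obtain ⟨k, hkdef⟩ := hdvd
      have hk0 : k ≠ 0 := by
        intro h
        rw [h, mul_zero] at hkdef
        exact hGv hkdef
      have hFvk : Fv = q.num * k := by
        have h3 : (q.den : ℤ) * (q.num * k) = (q.den : ℤ) * Fv := by
          calc (q.den : ℤ) * (q.num * k) = q.num * ((q.den : ℤ) * k) := by ring
            _ = q.num * Gv := by rw [← hkdef]
            _ = Fv * (q.den : ℤ) := hcross
            _ = (q.den : ℤ) * Fv := by ring
        have := mul_left_cancel₀ (by exact_mod_cast q.den_nz : ((q.den : ℤ)) ≠ 0) h3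
        omega
      refine ⟨k, hk0, ⟨q.num, by rw [hFvk]; ring⟩, ⟨(q.den : ℤ), by rw [hkdef]; ring⟩, ?_⟩
      rw [max_mul_of_nonneg _ _ (abs_nonneg _)]
      congr 1
      · rw [← abs_mul]
        congr 1
        rw [hFvk]
        push_cast
        ring
      · rw [hkdef]
        push_cast
        rw [abs_mul, abs_of_pos (by exact_mod_cast q.pos : (0:ℝ) < (q.den:ℝ))]
  -- k divides R
  have hkR : k ∣ R := hR ▸ dvd_sylRes f g d hd2 m n k hmn hkF hkG
  have hkleR : |(k:ℝ)| ≤ |(R:ℝ)| := by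
    have h1 : |k| ≤ |R| := Int.le_of_dvd (abs_pos.mpr hRne) ((abs_dvd_abs k R).mpr hkR)
    exact_mod_cast h1
  have hkpos : (0:ℝ) < |(k:ℝ)| := abs_pos.mpr (by exact_mod_cast hk0)
  -- final chain
  have hfinal : D * Mr ^ d / |(R:ℝ)| ≤ max (|(q.num:ℝ)|) (q.den : ℝ) := by
    rw [div_le_iff₀ hRabs]
    calc D * Mr ^ d ≤ max (|(Fv:ℝ)|) (|(Gv:ℝ)|) := key
      _ = max (|(q.num:ℝ)|) (q.den : ℝ) * |(k:ℝ)| := hmain.symm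
      _ ≤ max (|(q.num:ℝ)|) (q.den : ℝ) * |(R:ℝ)| := by
          apply mul_le_mul_of_nonneg_left hkleR
          exact le_trans (by norm_num) (le_max_right _ _)
  have hmaxqpos : (0:ℝ) < max (|(q.num:ℝ)|) (q.den : ℝ) :=
    lt_of_lt_of_le (lt_of_lt_of_le one_pos hqden1) (le_max_right _ _)
  have hlhs : weilHeight q = Real.log (max (|(q.num:ℝ)|) (q.den : ℝ)) := rfl
  have hquotpos : (0:ℝ) < D * Mr ^ d / |(R:ℝ)| := by positivity
  have hstep : Real.log (D * Mr ^ d / |(R:ℝ)|) ≤ weilHeight q := by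
    rw [hlhs]
    exact (Real.log_le_log_iff hquotpos hmaxqpos).mpr hfinal
  have hwx : weilHeight x = Real.log Mr := by
    rw [weilHeight]
  have hexpand : Real.log (D * Mr ^ d / |(R:ℝ)|)
      = d * weilHeight x + Real.log (D / |(R:ℝ)|) := by
    rw [hwx, Real.log_div (by positivity) (ne_of_gt hRabs),
      Real.log_mul (ne_of_gt hDpos) (ne_of_gt hMdpos),
      Real.log_div (ne_of_gt hDpos) (ne_of_gt hRabs), Real.log_pow]
    ring
  rw [ge_iff_le, ← hexpand]
  exact hstep

theorem height_lower_bound_one_step (f g : Polynomial ℤ) (d : ℕ)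
    (hd : d = max f.natDegree g.natDegree) (hd2 : 2 ≤ d)
    (hcop : IsCoprime (f.map (Int.castRingHom ℚ)) (g.map (Int.castRingHom ℚ)))
    (R : ℤ) (hR : R = sylRes f g d) :
    ∃ D : ℝ, 0 < D ∧
      IsLeast
        (insert (max (|((f.coeff d : ℤ) : ℝ)|) (|((g.coeff d : ℤ) : ℝ)|))
          (Set.range fun t : ℝ =>
            max |Polynomial.aeval t f| |Polynomial.aeval t g| /
              max (|t| ^ d) 1)) D ∧
      ∀ x : ℚ,
        weilHeight ((Polynomial.aeval x f) / (Polynomial.aeval x g)) ≥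
          d * weilHeight x + Real.log (D / |(R : ℝ)|) := by
  obtain ⟨D, hDpos, hleast⟩ := exists_least_D f g d hd hd2 hcop
  refine ⟨D, hDpos, hleast, ?_⟩
  intro x
  apply height_bound f g d hd hd2 hcop R hR D hDpos
  intro t
  exact hleast.2 (Set.mem_insert_of_mem _ ⟨t, rfl⟩)
end
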